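/- arXiv:math/9907180 — 7 statements merged into one kernel-verified Lean document; each statement's English description precedes it below -/
import Mathlib

section
/- Let p and q be distinct primes, let K be a finite abelian p-group, and let σ be an automorphism of K of order q such that for every proper subgroup S of K with σ(S) = S, the restriction of σ to S is the identity map. Then K has exponent p, i.e., every element x of K satisfies p·x = 0. -/
/-!
Put `τ x = σ x - x`; the range of `τ` and the subgroup `p • K` are `σ`-invariant, because `σ`
commutes with `τ` and with multiplication by `p`. If `σ` fixed the range of `τ` pointwise, then
`σ^k x = x + k • τ x`, so `q • τ x = 0`; as `q` is prime to `|K|` this forces `τ = 0`, i.e. `σ = 1`.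
Hence `τ` is onto. On the other hand `p • K` is proper unless `K = 0`, so `σ` fixes it, and then
`p • τ w = τ (p • w) = 0` for every `w`.
-/

namespace AddAut

variable {K : Type*} [AddCommGroup K]

theorem map_range_eq_of_commute (σ : AddAut K) (f : K →+ K) (hf : ∀ x, σ (f x) = f (σ x)) :
    f.range.map σ.toAddMonoidHom = f.range := by
  have hcomm : σ.toAddMonoidHom.comp f = f.comp σ.toAddMonoidHom := AddMonoidHom.ext hf
  rw [AddMonoidHom.map_range, hcomm, AddMonoidHom.range_comp,
    AddMonoidHom.range_eq_top.mpr σ.surjective, ← AddMonoidHom.range_eq_map]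

theorem nsmul_apply_of_apply_sub_fixed (σ : AddAut K) {x : K} (hx : σ (σ x - x) = σ x - x)
    (k : ℕ) : (k • σ) x = x + k • (σ x - x) := by
  induction k with
  | zero => simp
  | succ k ih =>
    rw [succ_nsmul', add_apply, ih, map_add, map_nsmul, hx, succ_nsmul]
    abel

theorem apply_eq_self_of_apply_sub_fixed [Fintype K] (σ : AddAut K)
    (hσ : (addOrderOf σ).Coprime (Fintype.card K)) {x : K} (hx : σ (σ x - x) = σ x - x) :
    σ x = x := by
  have hkill : addOrderOf σ • (σ x - x) = 0 := by
    have h := σ.nsmul_apply_of_apply_sub_fixed hx (addOrderOf σ)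
    rwa [addOrderOf_nsmul_eq_zero, zero_apply, left_eq_add] at h
  have hone : addOrderOf (σ x - x) = 1 :=
    Nat.eq_one_of_dvd_one <| hσ.gcd_eq_one ▸
      Nat.dvd_gcd (addOrderOf_dvd_of_nsmul_eq_zero hkill) addOrderOf_dvd_card
  exact sub_eq_zero.mp (AddMonoid.addOrderOf_eq_one_iff.mp hone)

end AddAut

theorem AddMonoidHom.range_nsmul_id_ne_top {K : Type*} [AddCommGroup K] [Fintype K] {p : ℕ}
    (hp : p.Prime) (hdvd : p ∣ Fintype.card K) : (p • AddMonoidHom.id K).range ≠ ⊤ := by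
  have : Fact p.Prime := ⟨hp⟩
  obtain ⟨y, hy⟩ := exists_prime_addOrderOf_dvd_card p hdvd
  have hy0 : y ≠ 0 := fun h => hp.ne_one (by rw [← hy, h, addOrderOf_zero])
  intro htop
  have hinj := Finite.injective_iff_surjective.mpr (AddMonoidHom.range_eq_top.mp htop)
  exact hy0 (hinj (by simp [← hy, addOrderOf_nsmul_eq_zero]))

/-- Let `p` and `q` be distinct primes, let `K` be a finite abelian `p`-group, and let `σ` be
an automorphism of `K` of order `q` such that for every proper subgroup `S` of `K` with
`σ(S) = S`, the restriction of `σ` to `S` is the identity. Then `K` has exponent `p`. -/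
theorem stmt_0 (p q : ℕ) (hp : p.Prime) (hq : q.Prime) (hpq : p ≠ q)
    (K : Type*) [AddCommGroup K] [Fintype K] (hK : ∃ n : ℕ, Fintype.card K = p ^ n)
    (σ : AddAut K) (hσ : addOrderOf σ = q)
    (hinv : ∀ S : AddSubgroup K, S ≠ ⊤ → AddSubgroup.map σ.toAddMonoidHom S = S →
      ∀ x ∈ S, σ x = x) :
    ∀ x : K, p • x = 0 := by
  obtain ⟨n, hn⟩ := hK
  let τ : K →+ K := σ.toAddMonoidHom - AddMonoidHom.id K
  let μ : K →+ K := p • AddMonoidHom.id K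
  have hτ_top : τ.range = ⊤ := by
    by_contra hne
    have hfix := hinv τ.range hne (σ.map_range_eq_of_commute τ fun x => by simp [τ])
    have hcop : (addOrderOf σ).Coprime (Fintype.card K) :=
      hσ ▸ hn ▸ ((Nat.coprime_primes hq hp).mpr hpq.symm).pow_right n
    refine hq.ne_one (hσ ▸ AddMonoid.addOrderOf_eq_one_iff.mpr ?_)
    ext x
    exact σ.apply_eq_self_of_apply_sub_fixed hcop (hfix _ ⟨x, rfl⟩)
  intro x
  obtain ⟨w, rfl⟩ := AddMonoidHom.range_eq_top.mp hτ_top x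
  rcases n.eq_zero_or_pos with rfl | hn0
  · have : Subsingleton K := Fintype.card_le_one_iff_subsingleton.mp (by simp [hn])
    exact Subsingleton.elim _ _
  have hμ : μ.range ≠ ⊤ := AddMonoidHom.range_nsmul_id_ne_top hp (hn ▸ dvd_pow_self p hn0.ne')
  have hfix := hinv μ.range hμ (σ.map_range_eq_of_commute μ fun x => by simp [μ])
  calc p • τ w = τ (p • w) := (map_nsmul τ p w).symm
    _ = 0 := sub_eq_zero.mpr (hfix _ ⟨w, rfl⟩)
end

section
/- Let G be a finite nonabelian group every proper subgroup of which is abelian. Then either G is a p-group for some prime p, or there exist distinct primes p and q and an integer n ≥ 1 such that G is an internal semidirect product K ⋊ Q, where K is a normal elementary abelian p-subgroup of G (every nontrivial element of K has order p), Q is a cyclic subgroup of G of order qⁿ with K ∩ Q = 1 and K·Q = G, and the automorphism of K given by conjugation by a generator of Q has order q. -/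
section Aux
variable {G : Type*} [Group G]

/-- The `r`-primary component of an "abelian" subgroup `K`, as a subgroup of `G`. -/
def MyPrimComp (K : Subgroup G)
    (hKab : ∀ a b : G, a ∈ K → b ∈ K → a * b = b * a) (r : ℕ) : Subgroup G where
  carrier := {x | x ∈ K ∧ ∃ n : ℕ, x ^ r ^ n = 1}
  one_mem' := ⟨K.one_mem, 0, one_pow _⟩
  mul_mem' := by
    rintro a b ⟨haK, m, hm⟩ ⟨hbK, n, hn⟩
    refine ⟨K.mul_mem haK hbK, m + n, ?_⟩
    have hc : Commute a b := hKab a b haK hbK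
    rw [hc.mul_pow, pow_add, pow_mul, hm, one_pow, one_mul, mul_comm (r ^ m), pow_mul, hn, one_pow]
  inv_mem' := by
    rintro a ⟨haK, m, hm⟩
    exact ⟨K.inv_mem haK, m, by rw [inv_pow, hm, inv_one]⟩

theorem myPrimComp_le (K : Subgroup G) (hKab) (r : ℕ) : MyPrimComp K hKab r ≤ K :=
  fun _ hx => hx.1

theorem myPrimComp_normal (K : Subgroup G) (hKab) (r : ℕ) (hK : K.Normal) :
    (MyPrimComp K hKab r).Normal := by
  constructor
  rintro x ⟨hxK, n, hxn⟩ g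
  exact ⟨hK.conj_mem x hxK g, n, by rw [conj_pow, hxn, mul_one, mul_inv_cancel]⟩

/-- The subgroup of elements of `K` killed by `p`. -/
def MyOmega (K : Subgroup G)
    (hKab : ∀ a b : G, a ∈ K → b ∈ K → a * b = b * a) (p : ℕ) : Subgroup G where
  carrier := {x | x ∈ K ∧ x ^ p = 1}
  one_mem' := ⟨K.one_mem, one_pow _⟩
  mul_mem' := by
    rintro a b ⟨haK, hm⟩ ⟨hbK, hn⟩
    have hc : Commute a b := hKab a b haK hbK
    exact ⟨K.mul_mem haK hbK, by rw [hc.mul_pow, hm, hn, one_mul]⟩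
  inv_mem' := by
    rintro a ⟨haK, hm⟩
    exact ⟨K.inv_mem haK, by rw [inv_pow, hm, inv_one]⟩

theorem myOmega_normal (K : Subgroup G) (hKab) (p : ℕ) (hK : K.Normal) :
    (MyOmega K hKab p).Normal := by
  constructor
  rintro x ⟨hxK, hxn⟩ g
  exact ⟨hK.conj_mem x hxK g, by rw [conj_pow, hxn, mul_one, mul_inv_cancel]⟩

end Aux

/-- A finite nonabelian group all of whose proper subgroups are abelian is either a `p`-group,
or an internal semidirect product `K ⋊ Q` with `K` a normal elementary abelian `p`-subgroup,
`Q` cyclic of order `qⁿ` (`p ≠ q` primes, `n ≥ 1`), where conjugation by a generator of `Q`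
induces an automorphism of `K` of order `q`. -/
theorem stmt_1 (G : Type*) [Group G] [Fintype G]
    (hnab : ∃ a b : G, a * b ≠ b * a)
    (hprop : ∀ H : Subgroup G, H ≠ ⊤ → ∀ a b : G, a ∈ H → b ∈ H → a * b = b * a) :
    (∃ p : ℕ, p.Prime ∧ IsPGroup p G) ∨
    (∃ p q n : ℕ, p.Prime ∧ q.Prime ∧ p ≠ q ∧ 1 ≤ n ∧
      ∃ K Q : Subgroup G, K.Normal ∧
        (∀ x ∈ K, x ≠ 1 → orderOf x = p) ∧
        (∀ a b : G, a ∈ K → b ∈ K → a * b = b * a) ∧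
        IsCyclic Q ∧ Nat.card Q = q ^ n ∧
        K ⊓ Q = ⊥ ∧ K ⊔ Q = ⊤ ∧
        ∃ b ∈ Q, Subgroup.zpowers b = Q ∧
          (∃ x ∈ K, b * x * b⁻¹ ≠ x) ∧ (∀ x ∈ K, b ^ q * x * (b ^ q)⁻¹ = x)) := by
  classical
  by_cases hp : ∃ p : ℕ, p.Prime ∧ IsPGroup p G
  · exact Or.inl hp
  right
  obtain ⟨a0, b0, hab0⟩ := hnab
  -- a subgroup equal to ⊤ whose underlying group is a p-group makes G a p-group
  have htop_pgroup : ∀ (r : ℕ) (R : Subgroup G), IsPGroup r ↥R → R = ⊤ → IsPGroup r G := by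
    intro r R hR hRt
    subst hRt
    intro g
    obtain ⟨k, hk⟩ := hR ⟨g, Subgroup.mem_top g⟩
    exact ⟨k, by simpa [Subtype.ext_iff] using hk⟩
  -- Step 1: there is a non-normal Sylow subgroup
  have hnonnormal : ∃ q : ℕ, ∃ _ : Fact q.Prime, ∃ Q : Sylow q G, ¬ (Q : Subgroup G).Normal := by
    by_contra hall
    push_neg at hall
    have hn : ∀ {r : ℕ} [Fact r.Prime] (P : Sylow r G), (P : Subgroup G).Normal := by
      intro r hr P; exact hall r hr P
    have e := Sylow.directProductOfNormal hn
    apply hab0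
    have key : ∀ x y : (∀ p : (Nat.card G).primeFactors, ∀ P : Sylow p G, ↥P),
        x * y = y * x := by
      intro x y
      funext p P
      haveI : Fact (p : ℕ).Prime := ⟨Nat.prime_of_mem_primeFactors p.2⟩
      have hproper : (P : Subgroup G) ≠ ⊤ := by
        intro hPt
        exact hp ⟨p, Fact.out, htop_pgroup p P P.isPGroup' hPt⟩
      exact Subtype.ext (hprop P hproper _ _ (x p P).2 (y p P).2)
    calc a0 * b0 = e (e.symm a0 * e.symm b0) := by simp
      _ = e (e.symm b0 * e.symm a0) := by rw [key]
      _ = b0 * a0 := by simp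
  obtain ⟨q, hqF, Q, hQnn⟩ := hnonnormal
  haveI := hqF
  have hq : q.Prime := hqF.out
  have hNproper : Subgroup.normalizer ((Q : Subgroup G) : Set G) ≠ ⊤ := fun h =>
    hQnn (Subgroup.normalizer_eq_top_iff.mp h)
  have hP : Subgroup.normalizer ((Q : Subgroup G) : Set G) ≤ Subgroup.centralizer (Q : Set G) := by
    intro g hg
    rw [Subgroup.mem_centralizer_iff]
    intro x hx
    exact hprop _ hNproper x g (Subgroup.le_normalizer hx) hg
  set K := (MonoidHom.transferSylow Q hP).ker with hKdef
  haveI hKnormal : K.Normal := MonoidHom.normal_ker _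
  have hcompl : Subgroup.IsComplement' K (Q : Subgroup G) :=
    MonoidHom.ker_transferSylow_isComplement' Q hP
  have hKQdisj : K ⊓ (Q : Subgroup G) = ⊥ := hcompl.disjoint.eq_bot
  have hKQtop : K ⊔ (Q : Subgroup G) = ⊤ := hcompl.sup_eq_top
  have hQproper : (Q : Subgroup G) ≠ ⊤ := by
    intro h
    exact hp ⟨q, hq, htop_pgroup q Q Q.isPGroup' h⟩
  have hQbot : (Q : Subgroup G) ≠ ⊥ := by
    intro h
    rw [h] at hQnn
    exact hQnn ⟨by intro x hx g; rw [Subgroup.mem_bot] at hx ⊢; rw [hx, mul_one, mul_inv_cancel]⟩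
  have hKbot : K ≠ ⊥ := by
    intro h
    rw [h, bot_sup_eq] at hKQtop
    exact hQproper hKQtop
  have hKproper : K ≠ ⊤ := by
    intro h
    rw [h, top_inf_eq] at hKQdisj
    exact hQbot hKQdisj
  have hKab : ∀ a b : G, a ∈ K → b ∈ K → a * b = b * a := hprop K hKproper
  -- membership decomposition for sup with normal left factor
  have hdecomp : ∀ (N R : Subgroup G), N.Normal → N ⊔ R = ⊤ →
      ∀ g : G, ∃ k ∈ N, ∃ u ∈ R, g = k * u := by
    intro N R hN htop g
    haveI := hN
    have hg : g ∈ (↑(N ⊔ R) : Set G) := by rw [htop]; trivial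
    rw [Subgroup.normal_mul] at hg
    obtain ⟨k, hk, u, hu, hmul⟩ := hg
    exact ⟨k, hk, u, hu, hmul.symm⟩
  -- if some abelian R with K ⊔ R = ⊤ centralizes K, then G is abelian: contradiction
  have key_ab : ∀ R : Subgroup G, K ⊔ R = ⊤ →
      (∀ u v : G, u ∈ R → v ∈ R → u * v = v * u) →
      (∀ x ∈ K, ∀ u ∈ R, x * u = u * x) → False := by
    intro R htop hRab hcent
    apply hab0
    obtain ⟨k1, hk1, u1, hu1, rfl⟩ := hdecomp K R hKnormal htop a0
    obtain ⟨k2, hk2, u2, hu2, rfl⟩ := hdecomp K R hKnormal htop b0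
    have c11 : Commute k1 k2 := hKab k1 k2 hk1 hk2
    have c12 : Commute k1 u2 := hcent k1 hk1 u2 hu2
    have c21 : Commute u1 k2 := (hcent k2 hk2 u1 hu1).symm
    have c22 : Commute u1 u2 := hRab u1 u2 hu1 hu2
    exact ((c11.mul_right c12).mul_left (c21.mul_right c22)).eq
  have hQab : ∀ u v : G, u ∈ (Q : Subgroup G) → v ∈ (Q : Subgroup G) → u * v = v * u :=
    hprop _ hQproper
  -- find b ∈ Q with K ⊔ ⟨b⟩ = ⊤
  have hbex : ∃ b ∈ (Q : Subgroup G), K ⊔ Subgroup.zpowers b = ⊤ := by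
    by_contra hno
    push_neg at hno
    refine key_ab (Q : Subgroup G) hKQtop hQab ?_
    intro x hx u hu
    exact hprop _ (hno u hu) x u (Subgroup.mem_sup_left hx)
      (Subgroup.mem_sup_right (Subgroup.mem_zpowers u))
  obtain ⟨b, hbQ, hbtop⟩ := hbex
  have hzQ : Subgroup.zpowers b = (Q : Subgroup G) := by
    refine le_antisymm (Subgroup.zpowers_le.mpr hbQ) ?_
    intro u hu
    obtain ⟨k, hk, w, hw, hmul⟩ := hdecomp K (Subgroup.zpowers b) hKnormal hbtop u
    have hkQ : k ∈ (Q : Subgroup G) := by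
      have hkow : k = u * w⁻¹ := by rw [hmul]; group
      rw [hkow]
      exact Subgroup.mul_mem _ hu (Subgroup.inv_mem _ (Subgroup.zpowers_le.mpr hbQ hw))
    have hkm : k ∈ K ⊓ (Q : Subgroup G) := ⟨hk, hkQ⟩
    rw [hKQdisj, Subgroup.mem_bot] at hkm
    rw [hmul, hkm, one_mul]
    exact hw
  have hcyc : IsCyclic ↥(Q : Subgroup G) := by
    refine ⟨⟨⟨b, hbQ⟩, ?_⟩⟩
    intro x
    have hx : (x : G) ∈ Subgroup.zpowers b := by rw [hzQ]; exact x.2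
    obtain ⟨m, hm⟩ := Subgroup.mem_zpowers_iff.mp hx
    refine Subgroup.mem_zpowers_iff.mpr ⟨m, ?_⟩
    ext
    push_cast
    exact hm
  set n := (Nat.card G).factorization q with hndef
  have hcardQ : Nat.card ↥(Q : Subgroup G) = q ^ n := Q.card_eq_multiplicity
  have hn1 : 1 ≤ n := by
    rcases Nat.eq_zero_or_pos n with h0 | h1
    · rw [h0, pow_zero] at hcardQ
      exact absurd (Subgroup.card_eq_one.mp hcardQ) hQbot
    · exact h1
  have horderb : orderOf b = q ^ n := by
    rw [← Nat.card_zpowers, hzQ]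
    exact hcardQ
  -- b ^ q centralizes K
  have hbqtop : K ⊔ Subgroup.zpowers (b ^ q) ≠ ⊤ := by
    intro htop
    obtain ⟨k, hk, w, hw, hmul⟩ := hdecomp K _ hKnormal htop b
    obtain ⟨m, hm⟩ := Subgroup.mem_zpowers_iff.mp hw
    have hwb : w = b ^ ((q : ℤ) * m) := by
      rw [zpow_mul, zpow_natCast, hm]
    have hkQ : k ∈ (Q : Subgroup G) := by
      have hkow : k = b * w⁻¹ := by rw [hmul]; group
      rw [hkow, hwb]
      exact Subgroup.mul_mem _ hbQ (Subgroup.inv_mem _ (by rw [← hzQ]; exact ⟨(q : ℤ) * m, rfl⟩))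
    have hkm : k ∈ K ⊓ (Q : Subgroup G) := ⟨hk, hkQ⟩
    rw [hKQdisj, Subgroup.mem_bot] at hkm
    rw [hkm, one_mul, hwb] at hmul
    have hbz : b ^ ((q : ℤ) * m - 1) = 1 := by
      rw [zpow_sub, zpow_one, ← hmul]
      group
    have hdvd : ((orderOf b : ℤ)) ∣ ((q : ℤ) * m - 1) := orderOf_dvd_iff_zpow_eq_one.mpr hbz
    rw [horderb] at hdvd
    have hqdvd : (q : ℤ) ∣ ((q : ℤ) * m - 1) := by
      refine dvd_trans ?_ (by exact_mod_cast hdvd)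
      exact_mod_cast dvd_pow_self (q : ℤ) (by omega : n ≠ 0)
    have h1 : (q : ℤ) ∣ 1 := by
      have hsub := dvd_sub (Dvd.dvd.mul_right (dvd_refl (q : ℤ)) (m : ℤ)) hqdvd
      simpa using hsub
    have hle : (q : ℤ) ≤ 1 := Int.le_of_dvd one_pos h1
    have := hq.two_le
    omega
  have hbqcent : ∀ x ∈ K, x * b ^ q = b ^ q * x := by
    intro x hx
    exact hprop _ hbqtop x (b ^ q) (Subgroup.mem_sup_left hx)
      (Subgroup.mem_sup_right (Subgroup.mem_zpowers _))
  -- b does not centralize K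
  have hbnotcent : ∃ x ∈ K, b * x * b⁻¹ ≠ x := by
    by_contra hno
    push_neg at hno
    refine key_ab (Subgroup.zpowers b) hbtop ?_ ?_
    · rintro u v ⟨i, rfl⟩ ⟨j, rfl⟩
      exact ((Commute.refl b).zpow_zpow i j).eq
    · intro x hx u hu
      obtain ⟨i, rfl⟩ := Subgroup.mem_zpowers_iff.mp hu
      have hc : Commute b x := by
        show b * x = x * b
        conv_rhs => rw [← hno x hx]
        group
      exact (hc.symm.zpow_right i).eq
  -- K is a p-group for a single prime p
  have hPrsup : ∃ r : ℕ, r.Prime ∧ MyPrimComp K hKab r ⊔ (Q : Subgroup G) = ⊤ := by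
    by_contra hno
    push_neg at hno
    refine key_ab (Q : Subgroup G) hKQtop hQab ?_
    have main : ∀ N : ℕ, ∀ x ∈ K, orderOf x ≤ N → ∀ u ∈ (Q : Subgroup G), x * u = u * x := by
      intro N
      induction N with
      | zero =>
        intro x _ hord _ _
        exact absurd hord (by simpa using (orderOf_pos x).ne')
      | succ N ih =>
        intro x hx hord u hu
        rcases eq_or_ne x 1 with rfl | hx1
        · rw [one_mul, mul_one]
        have hd0 : orderOf x ≠ 0 := (orderOf_pos x).ne'
        have hd1 : orderOf x ≠ 1 := fun h => hx1 (orderOf_eq_one_iff.mp h)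
        obtain ⟨r, hr, hrdvd⟩ := Nat.exists_prime_and_dvd hd1
        set d := orderOf x with hddef
        set A := ordProj[r] d with hAdef
        set B := ordCompl[r] d with hBdef
        have hAB : A * B = d := Nat.ordProj_mul_ordCompl_eq_self d r
        have hcop : Nat.Coprime A B :=
          Nat.Coprime.pow_left _ (Nat.coprime_ordCompl hr hd0)
        have hiscop : IsCoprime (A : ℤ) (B : ℤ) := by
          rw [Int.isCoprime_iff_gcd_eq_one]
          exact_mod_cast hcop
        obtain ⟨s, t, hst⟩ := hiscop
        set y := x ^ (t * (B : ℤ)) with hydef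
        set z := x ^ (s * (A : ℤ)) with hzdef
        have hyK : y ∈ K := K.zpow_mem hx _
        have hzK : z ∈ K := K.zpow_mem hx _
        have hxyz : x = z * y := by
          rw [hydef, hzdef, ← zpow_add, hst, zpow_one]
        have hyA : y ^ A = 1 := by
          have h1 : y ^ A = x ^ (t * (B : ℤ) * (A : ℤ)) := by
            rw [hydef, ← zpow_natCast _ A, ← zpow_mul]
          have h2 : t * (B : ℤ) * (A : ℤ) = (d : ℤ) * t := by
            rw [← hAB]; push_cast; ring
          rw [h1, h2, zpow_mul, zpow_natCast, hddef, pow_orderOf_eq_one, one_zpow]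
        have hyP : y ∈ MyPrimComp K hKab r := by
          refine ⟨hyK, d.factorization r, ?_⟩
          show y ^ A = 1
          exact hyA
        have hzsmall : orderOf z ≤ N := by
          have hzB : z ^ B = 1 := by
            have h1 : z ^ B = x ^ (s * (A : ℤ) * (B : ℤ)) := by
              rw [hzdef, ← zpow_natCast _ B, ← zpow_mul]
            have h2 : s * (A : ℤ) * (B : ℤ) = (d : ℤ) * s := by
              rw [← hAB]; push_cast; ring
            rw [h1, h2, zpow_mul, zpow_natCast, hddef, pow_orderOf_eq_one, one_zpow]
          have hB0 : 0 < B := Nat.ordCompl_pos r hd0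
          have hdvd : orderOf z ∣ B := orderOf_dvd_of_pow_eq_one hzB
          have hBlt : B < d := by
            have hA2 : 2 ≤ A := by
              have hk1 : 1 ≤ d.factorization r :=
                (Nat.Prime.factorization_pos_of_dvd hr hd0 hrdvd)
              calc 2 ≤ r := hr.two_le
                _ = r ^ 1 := (pow_one r).symm
                _ ≤ A := Nat.pow_le_pow_right hr.pos hk1
            calc B < 2 * B := by omega
              _ ≤ A * B := Nat.mul_le_mul_right B hA2
              _ = d := hAB
          have := Nat.le_of_dvd hB0 hdvd
          omega
        have hyu : y * u = u * y :=
          hprop _ (hno r hr) y u (Subgroup.mem_sup_left hyP)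
            (Subgroup.mem_sup_right hu)
        have hzu : z * u = u * z := ih z hzK hzsmall u hu
        rw [hxyz, mul_assoc, hyu, ← mul_assoc, hzu, mul_assoc]
    intro x hx u hu
    exact main (orderOf x) x hx le_rfl u hu
  obtain ⟨p, hpprime, hptop⟩ := hPrsup
  have hPCnormal := myPrimComp_normal K hKab p hKnormal
  have hKP : ∀ x ∈ K, ∃ m : ℕ, x ^ p ^ m = 1 := by
    intro x hx
    obtain ⟨y, hy, u, hu, hmul⟩ := hdecomp _ (Q : Subgroup G) hPCnormal hptop x
    obtain ⟨hyK, mm, hym⟩ := hy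
    have huK : u ∈ K := by
      rw [show u = y⁻¹ * x by rw [hmul]; group]
      exact K.mul_mem (K.inv_mem hyK) hx
    have hum : u ∈ K ⊓ (Q : Subgroup G) := ⟨huK, hu⟩
    rw [hKQdisj, Subgroup.mem_bot] at hum
    rw [hmul, hum, mul_one]
    exact ⟨mm, hym⟩
  -- p ≠ q
  have hpneq : p ≠ q := by
    intro hpq
    obtain ⟨x, hxK, hx1⟩ := (Subgroup.nontrivial_iff_exists_ne_one K).mp
      ((Subgroup.nontrivial_iff_ne_bot K).mpr hKbot)
    obtain ⟨m, hm⟩ := hKP x hxK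
    have hdvd : orderOf x ∣ p ^ m := orderOf_dvd_of_pow_eq_one hm
    obtain ⟨j, hjm, hj⟩ := (Nat.dvd_prime_pow hpprime).mp hdvd
    have hj0 : j ≠ 0 := by
      intro h0
      rw [h0, pow_zero] at hj
      exact hx1 (orderOf_eq_one_iff.mp hj)
    have hpord : p ∣ orderOf x := by
      rw [hj]
      exact dvd_pow_self p hj0
    have hxcard : orderOf x ∣ Nat.card K := by
      have : orderOf (⟨x, hxK⟩ : ↥K) = orderOf x := Subgroup.orderOf_mk x hxK
      rw [← this]
      exact orderOf_dvd_natCard _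
    have hqdvdK : q ∣ Nat.card K := hpq ▸ hpord.trans hxcard
    exact MonoidHom.not_dvd_card_ker_transferSylow Q hP hqdvdK
  -- Omega dichotomy
  have hΩnormal := myOmega_normal K hKab p hKnormal
  by_cases hΩtop : MyOmega K hKab p ⊔ (Q : Subgroup G) = ⊤
  · -- K is elementary abelian: assemble the result
    have hKelem : ∀ x ∈ K, x ^ p = 1 := by
      intro x hx
      obtain ⟨y, hy, u, hu, hmul⟩ := hdecomp _ (Q : Subgroup G) hΩnormal hΩtop x
      obtain ⟨hyK, hyp⟩ := hy
      have huK : u ∈ K := by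
        rw [show u = y⁻¹ * x by rw [hmul]; group]
        exact K.mul_mem (K.inv_mem hyK) hx
      have hum : u ∈ K ⊓ (Q : Subgroup G) := ⟨huK, hu⟩
      rw [hKQdisj, Subgroup.mem_bot] at hum
      rw [hmul, hum, mul_one]
      exact hyp
    refine ⟨p, q, n, hpprime, hq, hpneq, hn1, K, (Q : Subgroup G), hKnormal, ?_, hKab, hcyc,
      hcardQ, hKQdisj, hKQtop, b, hbQ, hzQ, hbnotcent, ?_⟩
    · intro x hx hx1
      have hdvd : orderOf x ∣ p := orderOf_dvd_of_pow_eq_one (hKelem x hx)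
      rcases (Nat.dvd_prime hpprime).mp hdvd with h1 | h
      · exact absurd (orderOf_eq_one_iff.mp h1) hx1
      · exact h
    · intro x hx
      rw [← hbqcent x hx]
      group
  · -- impossible: b would centralize K
    exfalso
    have hΩcent : ∀ z, z ∈ MyOmega K hKab p → b * z = z * b := by
      intro z hz
      exact (hprop _ hΩtop z b (Subgroup.mem_sup_left hz)
        (Subgroup.mem_sup_right hbQ)).symm
    have hbK : ∀ m : ℕ, ∀ x ∈ K, x ^ p ^ m = 1 → b * x = x * b := by
      intro m
      induction m with
      | zero =>
        intro x _ h1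
        rw [pow_zero, pow_one] at h1
        rw [h1, one_mul, mul_one]
      | succ m ih =>
        intro x hx hxm
        have hxpK : x ^ p ∈ K := K.pow_mem hx p
        have hxp1 : (x ^ p) ^ p ^ m = 1 := by
          rw [← pow_mul, ← pow_succ']
          exact hxm
        have hbxp := ih (x ^ p) hxpK hxp1
        have hbxK : b * x * b⁻¹ ∈ K := hKnormal.conj_mem x hx b
        set z := b * x * b⁻¹ * x⁻¹ with hzdef
        have hzK : z ∈ K := K.mul_mem hbxK (K.inv_mem hx)
        have hzp : z ^ p = 1 := by
          have hcomm : Commute (b * x * b⁻¹) x⁻¹ := hKab _ _ hbxK (K.inv_mem hx)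
          rw [hzdef, hcomm.mul_pow, conj_pow, inv_pow, hbxp]
          group
        have hzΩ : z ∈ MyOmega K hKab p := ⟨hzK, hzp⟩
        have hcbz : Commute b z := hΩcent z hzΩ
        have hzx : b * x * b⁻¹ = z * x := by rw [hzdef]; group
        have hiter : ∀ j : ℕ, b ^ j * x * (b ^ j)⁻¹ = z ^ j * x := by
          intro j
          induction j with
          | zero => simp
          | succ j ihj =>
            have hstep : b ^ (j + 1) * x * (b ^ (j + 1))⁻¹
                = b * (b ^ j * x * (b ^ j)⁻¹) * b⁻¹ := by
              rw [pow_succ']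
              group
            rw [hstep, ihj]
            calc b * (z ^ j * x) * b⁻¹ = z ^ j * (b * x * b⁻¹) := by
                  rw [show b * (z ^ j * x) * b⁻¹ = b * z ^ j * x * b⁻¹ by group,
                    (hcbz.pow_right j).eq]
                  group
              _ = z ^ j * (z * x) := by rw [hzx]
              _ = z ^ (j + 1) * x := by rw [pow_succ]; group
        have hq_eq : z ^ q * x = x := by
          rw [← hiter q, ← hbqcent x hx]
          group
        have hzq : z ^ q = 1 := by
          have h1x : z ^ q * x = 1 * x := by rw [one_mul]; exact hq_eq
          exact mul_right_cancel h1x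
        have hz1 : z = 1 := by
          have h1 : orderOf z ∣ p := orderOf_dvd_of_pow_eq_one hzp
          have h2 : orderOf z ∣ q := orderOf_dvd_of_pow_eq_one hzq
          have hcop : Nat.Coprime p q := (Nat.coprime_primes hpprime hq).mpr hpneq
          have hgcd := Nat.dvd_gcd h1 h2
          rw [Nat.coprime_iff_gcd_eq_one.mp hcop] at hgcd
          rw [← orderOf_eq_one_iff]
          exact Nat.dvd_one.mp hgcd
        have hconj : b * x * b⁻¹ = x := by rw [hzx, hz1, one_mul]
        calc b * x = (b * x * b⁻¹) * b := by group
          _ = x * b := by rw [hconj]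
    obtain ⟨x0, hx0K, hx0⟩ := hbnotcent
    obtain ⟨m, hm⟩ := hKP x0 hx0K
    apply hx0
    rw [hbK m x0 hx0K hm]
    group
end

section
/- Let p and q be distinct primes, let n ≥ 1, and let G be a nonabelian semidirect product ℤ/p ⋊ ℤ/qⁿ. If there exists an injective group homomorphism from G into SO(4), the group of 4×4 real orthogonal matrices of determinant 1, then q = 2. -/
/-!
Let `ξ` generate the normal subgroup `ℤ/p`; some `γ` conjugates `ξ` to `ξ ^ k` with `k` of
multiplicative order `q` modulo `p`. Complexify the orthogonal matrix `A` of `ξ`: its spectrum is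
closed under `μ ↦ μ⁻¹` (as `A⁻¹ = Aᵀ`) and under `μ ↦ μ ^ k` (as `A ^ k` is conjugate to `A`),
and it contains a primitive `p`-th root of unity `λ` since `A ≠ 1`. The orbit of `λ` under
`μ ↦ μ ^ (-k)` has as many elements as the order of `-k` modulo `p`, which is `2q` for odd `q`,
while a `4 × 4` matrix has at most four eigenvalues.
-/

open scoped Matrix

theorem orderOf_intCast_le_ncard {G : Type*} [Group G] {S : Set G} (hS : S.Finite) {g : G}
    (hg : g ∈ S) {m : ℤ} (hm : ∀ x ∈ S, x ^ m ∈ S) :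
    orderOf (m : ZMod (orderOf g)) ≤ S.ncard := by
  have hmem : ∀ j : ℕ, g ^ (m ^ j) ∈ S := by
    intro j
    induction j with
    | zero => simpa using hg
    | succ j ih => rw [pow_succ, zpow_mul]; exact hm _ ih
  have hinj : Set.InjOn (fun j : ℕ ↦ g ^ (m ^ j)) (Set.Iio (orderOf (m : ZMod (orderOf g)))) := by
    intro i hi j hj hij
    refine pow_injOn_Iio_orderOf hi hj ?_
    rw [zpow_eq_zpow_iff_modEq, ← ZMod.intCast_eq_intCast_iff] at hij
    exact_mod_cast hij
  rw [Set.ncard_eq_toFinset_card S hS]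
  simpa using Finset.card_le_card_of_injOn (s := Finset.range _) _
    (fun j _ ↦ hS.mem_toFinset.2 (hmem j)) (by simpa using hinj)

theorem orderOf_neg_eq_two_mul {R : Type*} [CommRing R] [Nontrivial R] (hR : ringChar R ≠ 2)
    {x : R} (hx : Odd (orderOf x)) : orderOf (-x) = 2 * orderOf x := by
  have h2 : orderOf (-1 : R) = 2 := by rw [orderOf_neg_one, if_neg hR]
  rw [neg_eq_neg_one_mul, (Commute.all _ _).orderOf_mul_eq_mul_orderOf_of_coprime, h2]
  rwa [h2, Nat.coprime_two_left]

open Polynomial in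
theorem spectrum.exists_ne_one_of_pow_eq_one {K A : Type*} [Field K] [IsAlgClosed K] [Ring A]
    [Algebra K A] [FiniteDimensional K A] {a : A} {p : ℕ} (hp : (p : K) ≠ 0) (hap : a ^ p = 1)
    (ha : a ≠ 1) : ∃ μ ∈ spectrum K a, μ ≠ 1 := by
  have : Nontrivial A := nontrivial_of_ne a 1 ha
  have hne := spectrum.nonempty_of_isAlgClosed_of_finiteDimensional K a
  by_contra! h
  have hσ : spectrum K a = {1} := Set.eq_singleton_iff_nonempty_unique_mem.mpr ⟨hne, h⟩
  -- `∑ aⁱ` has spectrum `{p}` by spectral mapping, hence is invertible and kills `a - 1`.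
  have hunit : IsUnit (∑ i ∈ Finset.range p, a ^ i) := by
    have := spectrum.map_polynomial_aeval_of_nonempty a (∑ i ∈ Finset.range p, X ^ i) hne
    rw [hσ] at this
    rw [← spectrum.zero_notMem_iff K]
    simp only [map_sum, map_pow, aeval_X, eval_finsetSum, eval_pow, eval_X, one_pow,
      Finset.sum_const, Finset.card_range, nsmul_eq_mul, mul_one, Set.image_singleton] at this
    simpa [this, eq_comm] using hp
  have := geom_sum_mul a p
  rw [hap, sub_self] at this
  exact ha (sub_eq_zero.mp ((hunit.mul_right_eq_zero).mp this))

namespace Matrix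

variable {n : Type*} [Fintype n] [DecidableEq n]

theorem spectrum_transpose {R : Type*} [CommRing R] (M : Matrix n n R) :
    spectrum R Mᵀ = spectrum R M := by
  ext μ
  simp only [spectrum.mem_iff, isUnit_iff_isUnit_det]
  rw [← det_transpose, transpose_sub, transpose_transpose, algebraMap_eq_diagonal,
    diagonal_transpose]

variable {K : Type*} [Field K]

theorem inv_mem_spectrum_of_transpose_mul_self {M : Matrix n n K} (hM : Mᵀ * M = 1) {μ : K}
    (hμ : μ ∈ spectrum K M) : μ⁻¹ ∈ spectrum K M := by
  let u : (Matrix n n K)ˣ := ⟨M, Mᵀ, mul_eq_one_comm.mp hM, hM⟩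
  have hμ0 : μ ≠ 0 := spectrum.ne_zero_of_mem_of_unit (a := u) hμ
  simpa [u, spectrum_transpose] using
    (spectrum.inv_mem_iff (r := Units.mk0 μ hμ0) (a := u)).mp hμ

open scoped Classical in
theorem ncard_spectrum_le (M : Matrix n n K) : (spectrum K M).ncard ≤ Fintype.card n := by
  calc (spectrum K M).ncard ≤ (M.charpoly.roots.toFinset : Set K).ncard :=
        Set.ncard_le_ncard (fun μ hμ ↦ by
          simpa [M.charpoly_monic.ne_zero] using mem_spectrum_iff_isRoot_charpoly.mp hμ)
          (Finset.finite_toSet _)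
    _ ≤ M.charpoly.natDegree := by
        rw [Set.ncard_coe_finset]
        exact (Multiset.toFinset_card_le _).trans (Polynomial.card_roots' _)
    _ = Fintype.card n := charpoly_natDegree_eq_dim M

theorem transpose_map_mul_map_of_mem_orthogonalGroup {R S : Type*} [CommRing R] [CommRing S]
    (σ : R →+* S) {M : Matrix n n R} (hM : M ∈ orthogonalGroup n R) :
    (M.map σ)ᵀ * M.map σ = 1 := by
  rw [← transpose_map, ← Matrix.map_mul, (mem_orthogonalGroup_iff' n R).mp hM,
    Matrix.map_one _ σ.map_zero σ.map_one]

theorem orderOf_neg_natCast_le_card [IsAlgClosed K] [CharZero K] {p : ℕ} [Fact p.Prime]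
    {A : Matrix n n K} (hA : Aᵀ * A = 1) (hAp : A ^ p = 1) (hA1 : A ≠ 1)
    {B : (Matrix n n K)ˣ} {k : ℕ} (hBA : B * A * B⁻¹ = A ^ k) :
    orderOf (-(k : ZMod p)) ≤ Fintype.card n := by
  have hp := (Fact.out : p.Prime)
  have : Nontrivial (Matrix n n K) := nontrivial_of_ne A 1 hA1
  obtain ⟨μ, hμ, hμ1⟩ := spectrum.exists_ne_one_of_pow_eq_one (K := K)
    (Nat.cast_ne_zero.mpr hp.ne_zero) hAp hA1
  have hμp : μ ^ p = 1 := by simpa [hAp, spectrum.one_eq] using spectrum.pow_mem_pow A p hμ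
  have hμ0 : μ ≠ 0 := by rintro rfl; simp [hp.ne_zero] at hμp
  have hpow : ∀ ν ∈ spectrum K A, (ν ^ k)⁻¹ ∈ spectrum K A := fun ν hν ↦
    inv_mem_spectrum_of_transpose_mul_self hA <| by
      simpa only [← hBA, spectrum.units_conjugate] using spectrum.pow_mem_pow A k hν
  let S : Set Kˣ := Units.val ⁻¹' spectrum K A
  have hord : orderOf (Units.mk0 μ hμ0) = p := by
    rw [← orderOf_units]; exact orderOf_eq_prime hμp hμ1
  calc orderOf (-(k : ZMod p)) = orderOf (((-k : ℤ) : ZMod (orderOf (Units.mk0 μ hμ0)))) := by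
        rw [hord]; push_cast; rfl
    _ ≤ S.ncard := orderOf_intCast_le_ncard (A.finite_spectrum.preimage Units.val_injective.injOn)
        hμ fun u hu ↦ by simpa [S] using hpow _ hu
    _ ≤ (spectrum K A).ncard := Set.ncard_le_ncard_of_injOn _ (fun _ hu ↦ hu)
        Units.val_injective.injOn A.finite_spectrum
    _ ≤ Fintype.card n := A.ncard_spectrum_le

end Matrix

theorem ZMod.orderOf_toAdd_mulAut_apply_one {n : ℕ} (α : MulAut (Multiplicative (ZMod n))) :
    orderOf (Multiplicative.toAdd (α (Multiplicative.ofAdd 1))) = orderOf α := by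
  let e := (MulAutMultiplicative (ZMod n)).trans (ZMod.AddAutEquivUnits n).toMultiplicative
  rw [← orderOf_injective e.toMonoidHom e.injective α]
  exact orderOf_units (y := e α)

theorem ZMod.ofAdd_eq_ofAdd_one_pow_val {n : ℕ} [NeZero n] (z : ZMod n) :
    Multiplicative.ofAdd z = Multiplicative.ofAdd 1 ^ z.val := by
  rw [← ofAdd_nsmul, nsmul_one, ZMod.natCast_zmod_val]

theorem MonoidHom.exists_orderOf_apply_eq_of_card_range {G H : Type*} [Group G] [Group H]
    (f : G →* H) {q : ℕ} (hq : q.Prime) (hf : Nat.card f.range = q) :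
    ∃ g, orderOf (f g) = q := by
  have : Fact q.Prime := ⟨hq⟩
  have : Finite f.range := Nat.finite_of_card_ne_zero (hf ▸ hq.ne_zero)
  obtain ⟨⟨_, g, rfl⟩, hg⟩ := exists_prime_orderOf_dvd_card' (G := f.range) q hf.symm.dvd
  exact ⟨g, (Subgroup.orderOf_coe _).trans hg⟩

theorem SemidirectProduct.exists_conj_eq_pow {p q : ℕ} [Fact p.Prime] {G : Type*} [Group G]
    {φ : G →* MulAut (Multiplicative (ZMod p))} (hq : q.Prime) (hφ : Nat.card φ.range = q) :
    ∃ (ξ γ : Multiplicative (ZMod p) ⋊[φ] G) (c : ZMod p),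
      ξ ^ p = 1 ∧ ξ ≠ 1 ∧ γ * ξ * γ⁻¹ = ξ ^ c.val ∧ orderOf c = q := by
  obtain ⟨g, hg⟩ := φ.exists_orderOf_apply_eq_of_card_range hq hφ
  let c := Multiplicative.toAdd (φ g (Multiplicative.ofAdd 1))
  refine ⟨inl (Multiplicative.ofAdd 1), inr g, c, ?_, ?_, ?_, ?_⟩
  · rw [← map_pow, ← ofAdd_nsmul, nsmul_one, ZMod.natCast_self, ofAdd_zero, map_one]
  · exact (map_ne_one_iff _ inl_injective).mpr (by simp)
  · rw [← map_inv, ← inl_aut, ← map_pow, ← ZMod.ofAdd_eq_ofAdd_one_pow_val]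
    rfl
  · rw [ZMod.orderOf_toAdd_mulAut_apply_one, hg]

theorem stmt_2_general (p q n : ℕ) (hp : p.Prime) (hq : q.Prime)
    (φ : Multiplicative (ZMod (q ^ n)) →* MulAut (Multiplicative (ZMod p)))
    (hφ : Nat.card φ.range = q)
    (f : (Multiplicative (ZMod p) ⋊[φ] Multiplicative (ZMod (q ^ n))) →*
      Matrix.specialOrthogonalGroup (Fin 4) ℝ)
    (hf : Function.Injective f) :
    q = 2 := by
  rcases hq.eq_two_or_odd' with rfl | hq_odd
  · rfl
  have : Fact p.Prime := ⟨hp⟩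
  obtain ⟨ξ, γ, c, hξp, hξ1, hconj, hc⟩ := SemidirectProduct.exists_conj_eq_pow hq hφ
  let ρ := (algebraMap ℝ ℂ).mapMatrix.toMonoidHom.comp
    ((Matrix.specialOrthogonalGroup (Fin 4) ℝ).subtype.comp f)
  have hρ : Function.Injective ρ :=
    (Matrix.map_injective (FaithfulSMul.algebraMap_injective ℝ ℂ)).comp
      (Subtype.val_injective.comp hf)
  have hle := Matrix.orderOf_neg_natCast_le_card (p := p) (A := ρ ξ) (B := ρ.toHomUnits γ)
    (k := c.val) (Matrix.transpose_map_mul_map_of_mem_orthogonalGroup _ (f ξ).2.1)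
    (by rw [← map_pow, hξp, map_one]) (by rw [← map_one ρ]; exact hρ.ne hξ1)
    (by simp only [MonoidHom.coe_toHomUnits, ← map_inv, ← map_mul, ← map_pow, hconj])
  have hc0 : c ≠ 0 := by rintro rfl; simp [hq.ne_zero.symm] at hc
  have hp2 : p ≠ 2 := by
    rintro rfl
    have := ZMod.orderOf_dvd_card_sub_one hc0
    rw [hc] at this
    exact hq.ne_one (Nat.dvd_one.mp this)
  rw [ZMod.natCast_zmod_val, orderOf_neg_eq_two_mul (by rwa [ZMod.ringChar_zmod_n]) (hc ▸ hq_odd),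
    hc, Fintype.card_fin] at hle
  have := hq.two_le
  omega

/-- If a nonabelian semidirect product `ℤ/p ⋊ ℤ/qⁿ` (with `p ≠ q` primes, `n ≥ 1`, the action
homomorphism having image of order `q`) embeds in `SO(4)`, then `q = 2`. -/
theorem stmt_2 (p q n : ℕ) (hp : p.Prime) (hq : q.Prime) (hpq : p ≠ q) (hn : 1 ≤ n)
    (φ : Multiplicative (ZMod (q ^ n)) →* MulAut (Multiplicative (ZMod p)))
    (hφ : Nat.card φ.range = q)
    (f : (Multiplicative (ZMod p) ⋊[φ] Multiplicative (ZMod (q ^ n))) →*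
      Matrix.specialOrthogonalGroup (Fin 4) ℝ)
    (hf : Function.Injective f) :
    q = 2 :=
  stmt_2_general p q n hp hq φ hφ f hf
end

section
/- Let p be a prime distinct from 3 and let n ≥ 1. If G is a nonabelian semidirect product ℤ/p ⋊ ℤ/3ⁿ, then there is no injective group homomorphism from G into O(3), the group of 3×3 real orthogonal matrices. -/
open Polynomial Module

lemma pow_apply_eig {K V : Type*} [Field K] [AddCommGroup V] [Module K V]
    (f : Module.End K V) (v : V) (ξ : K) (h : f v = ξ • v) (k : ℕ) :
    (f ^ k) v = ξ ^ k • v := by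
  induction k with
  | zero => simp
  | succ j ih =>
    rw [pow_succ', Module.End.mul_apply, ih, map_smul, h, smul_smul, ← pow_succ]

lemma zmodfacts (p : ℕ) (hp : p.Prime) (c : ZMod p) (hc1 : c ≠ 1) (hc3 : c ^ 3 = 1) :
    c ^ 2 ≠ 1 ∧ c ^ 2 ≠ c ∧ (-1 : ZMod p) ≠ 1 ∧ c ≠ -1 ∧ c ^ 2 ≠ -1 := by
  have hp2 : p ≠ 2 := by
    rintro rfl
    revert hc3 hc1
    revert c; decide
  have hc2 : c ^ 2 ≠ 1 := by
    intro h
    apply hc1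
    calc c = c ^ 2 * c := by rw [h, one_mul]
    _ = c ^ 3 := by ring
    _ = 1 := hc3
  have hneg : (-1 : ZMod p) ≠ 1 := by
    intro h
    have h2 : ((2 : ℕ) : ZMod p) = 0 := by push_cast; linear_combination -h
    rw [ZMod.natCast_eq_zero_iff] at h2
    exact hp2 ((Nat.prime_dvd_prime_iff_eq hp Nat.prime_two).mp h2)
  refine ⟨hc2, ?_, hneg, ?_, ?_⟩
  · intro h
    apply hc2
    have : c ^ 3 = c ^ 2 := by calc c ^ 3 = c ^ 2 * c := by ring
                                  _ = c * c := by rw [h]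
                                  _ = c ^ 2 := by ring
    rw [hc3] at this; exact this.symm
  · intro h
    apply hneg
    calc (-1 : ZMod p) = c ^ 3 := by rw [h]; ring
    _ = 1 := hc3
  · intro h
    apply hc1
    have h4 : c ^ 4 = 1 := by calc c ^ 4 = (c ^ 2) ^ 2 := by ring
                                   _ = (-1) ^ 2 := by rw [h]
                                   _ = 1 := by ring
    calc c = c ^ 3 * c := by rw [hc3, one_mul]
    _ = c ^ 4 := by ring
    _ = 1 := h4

lemma core (p r : ℕ) (hp : p.Prime) (hr1 : (r : ZMod p) ≠ 1) (hr3 : (r : ZMod p) ^ 3 = 1)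
    (A B : Matrix (Fin 3) (Fin 3) ℝ) (hA : A ^ p = 1) (hA1 : A ≠ 1)
    (hBu : IsUnit B) (hcomm : B * A = A ^ r * B) : False := by
  classical
  set ι : ℝ →+* ℂ := algebraMap ℝ ℂ with hιdef
  set A' : Matrix (Fin 3) (Fin 3) ℂ := ι.mapMatrix A with hA'def
  set B' : Matrix (Fin 3) (Fin 3) ℂ := ι.mapMatrix B with hB'def
  have hA'p : A' ^ p = 1 := by rw [hA'def, ← map_pow, hA, map_one]
  have hA'1 : A' ≠ 1 := by
    intro h
    apply hA1
    apply Matrix.map_injective (f := (ι : ℝ → ℂ)) ι.injective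
    show A.map ι = Matrix.map 1 ι
    rw [Matrix.map_one _ (map_zero ι) (map_one ι)]
    exact h
  have hB'u : IsUnit B' := hBu.map ι.mapMatrix
  have hcomm' : B' * A' = A' ^ r * B' := by
    rw [hA'def, hB'def, ← map_mul, hcomm, map_mul, map_pow]
  -- pass to endomorphisms
  set e := Matrix.toLinAlgEquiv' (R := ℂ) (n := Fin 3)
  set T : End ℂ (Fin 3 → ℂ) := e A' with hTdef
  set S : End ℂ (Fin 3 → ℂ) := e B' with hSdef
  have hTp : T ^ p = 1 := by rw [hTdef, ← map_pow, hA'p, map_one]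
  have hT1 : T ≠ 1 := by
    intro h
    apply hA'1
    have := congrArg e.symm h
    rw [hTdef] at this
    simpa using this
  have hSu : IsUnit S := hB'u.map e.toAlgHom.toRingHom.toMonoidHom
  have hcommT : S * T = T ^ r * S := by
    rw [hTdef, hSdef, ← map_mul, hcomm', map_mul, map_pow]
  -- minimal polynomial
  have hint : IsIntegral ℂ T := Algebra.IsIntegral.isIntegral T
  set m : ℂ[X] := minpoly ℂ T with hmdef
  clear_value m
  have hmonic : m.Monic := hmdef ▸ minpoly.monic hint
  have haevalXp : Polynomial.aeval T (X ^ p - C 1 : ℂ[X]) = 0 := by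
    simp [map_pow, hTp]
  have hdvd : m ∣ (X ^ p - C 1 : ℂ[X]) := hmdef ▸ minpoly.dvd ℂ T haevalXp
  have hsep : (X ^ p - C 1 : ℂ[X]).Separable := by
    apply Polynomial.separable_X_pow_sub_C
    · exact_mod_cast Nat.cast_ne_zero.mpr hp.ne_zero
    · exact one_ne_zero
  have hsq : Squarefree m := (hsep.of_dvd hdvd).squarefree
  have hsplits : Splits m := IsAlgClosed.splits m
  have hdeg : 0 < m.natDegree := hmdef ▸ minpoly.natDegree_pos hint
  -- find a root ≠ 1
  have hroot : ∃ μ : ℂ, m.IsRoot μ ∧ μ ≠ 1 := by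
    by_contra hcon
    push_neg at hcon
    have hallone : ∀ μ ∈ m.roots, μ = 1 := by
      intro μ hμ
      exact hcon μ (isRoot_of_mem_roots hμ)
    have hprod : m = (m.roots.map fun a => X - C a).prod :=
      hsplits.eq_prod_roots_of_monic hmonic
    have hcard : Multiset.card m.roots = m.natDegree := splits_iff_card_roots.mp hsplits
    have hrepl : m.roots.map (fun a => X - C a) =
        Multiset.replicate m.natDegree (X - C 1) := by
      rw [← hcard]
      rw [Multiset.eq_replicate]
      constructor
      · rw [Multiset.card_map]
      · intro q hq
        obtain ⟨a, ha, rfl⟩ := Multiset.mem_map.mp hq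
        rw [hallone a ha]
    have hm : m = (X - C 1) ^ m.natDegree := by
      conv_lhs => rw [hprod]
      rw [hrepl, Multiset.prod_replicate]
    have hnd : m.natDegree = 1 := by
      by_contra hne
      have h2 : 2 ≤ m.natDegree := by omega
      have hdd : (X - C 1 : ℂ[X]) * (X - C 1) ∣ m := by
        rw [hm, ← sq]; exact pow_dvd_pow _ h2
      exact Polynomial.not_isUnit_X_sub_C 1 (hsq _ hdd)
    rw [hnd, pow_one] at hm
    apply hT1
    have : Polynomial.aeval T m = 0 := by rw [hmdef]; exact minpoly.aeval ℂ T
    rw [hm] at this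
    simpa [sub_eq_zero] using this
  obtain ⟨μ, hμroot, hμ1⟩ := hroot
  have hμeig : T.HasEigenvalue μ := Module.End.hasEigenvalue_of_isRoot (hmdef ▸ hμroot)
  have hμp : μ ^ p = 1 := by
    have := hμroot.dvd hdvd
    simpa [sub_eq_zero] using this
  have hμ0 : μ ≠ 0 := by
    intro h
    rw [h, zero_pow hp.ne_zero] at hμp
    exact zero_ne_one hμp
  haveI : Fact p.Prime := ⟨hp⟩
  set u : ℂˣ := Units.mk0 μ hμ0 with hudef
  have hup : u ^ p = 1 := by ext; simpa [hudef] using hμp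
  have hu1 : u ≠ 1 := by
    intro h
    apply hμ1
    have := congrArg Units.val h
    simpa [hudef] using this
  have horder : orderOf u = p := orderOf_eq_prime hup hu1
  have hpoweq : ∀ a b : ℕ, μ ^ a = μ ^ b ↔ ((a : ZMod p) = (b : ZMod p)) := by
    intro a b
    have : μ ^ a = μ ^ b ↔ u ^ a = u ^ b := by
      constructor
      · intro h; ext; simpa [hudef] using h
      · intro h; have := congrArg Units.val h; simpa [hudef] using this
    rw [this, pow_eq_pow_iff_modEq, horder, ZMod.natCast_eq_natCast_iff]
  -- closure of eigenvalues under ν ↦ ν ^ r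
  have hstep : ∀ ν : ℂ, T.HasEigenvalue ν → T.HasEigenvalue (ν ^ r) := by
    intro ν hν
    obtain ⟨v, hv⟩ := hν.exists_hasEigenvector
    obtain ⟨s, hs⟩ := hSu
    have hs1 : ∀ x, (↑s⁻¹ : End ℂ (Fin 3 → ℂ)) (S x) = x := by
      intro x
      have : ((↑s⁻¹ * ↑s : End ℂ (Fin 3 → ℂ))) x = (1 : End ℂ (Fin 3 → ℂ)) x := by
        rw [Units.inv_mul]
      rw [hs] at this
      simpa using this
    have hs2 : ∀ x, S ((↑s⁻¹ : End ℂ (Fin 3 → ℂ)) x) = x := by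
      intro x
      have : ((↑s * ↑s⁻¹ : End ℂ (Fin 3 → ℂ))) x = (1 : End ℂ (Fin 3 → ℂ)) x := by
        rw [Units.mul_inv]
      rw [hs] at this
      simpa using this
    have hTv : T v = ν • v := Module.End.mem_eigenspace_iff.mp hv.1
    have hTrv : (T ^ r) v = ν ^ r • v := pow_apply_eig T v ν hTv r
    set w : Fin 3 → ℂ := (↑s⁻¹ : End ℂ (Fin 3 → ℂ)) v with hwdef
    have hw0 : w ≠ 0 := by
      intro h
      apply hv.2
      have := congrArg S h
      rw [hwdef] at this
      rw [hs2 v] at this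
      simpa using this
    have hTw : T w = ν ^ r • w := by
      have h1 : S (T w) = (T ^ r) v := by
        have := DFunLike.congr_fun hcommT w
        rw [Module.End.mul_apply, Module.End.mul_apply] at this
        rw [this, hwdef, hs2 v]
      have h2 : T w = (↑s⁻¹ : End ℂ (Fin 3 → ℂ)) ((T ^ r) v) := by
        rw [← h1, hs1]
      rw [h2, hTrv, map_smul]
    exact Module.End.hasEigenvalue_of_hasEigenvector ⟨Module.End.mem_eigenspace_iff.mpr hTw, hw0⟩
  -- closure of eigenvalues under conjugation
  have hconj : ∀ ν : ℂ, T.HasEigenvalue ν → T.HasEigenvalue (starRingEnd ℂ ν) := by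
    intro ν hν
    obtain ⟨v, hv⟩ := hν.exists_hasEigenvector
    have hv1 : A'.mulVec v = ν • v := by
      have := Module.End.mem_eigenspace_iff.mp hv.1
      rw [hTdef, Matrix.toLinAlgEquiv'_apply] at this
      exact this
    set w : Fin 3 → ℂ := fun i => starRingEnd ℂ (v i) with hwdef
    have hw0 : w ≠ 0 := by
      intro h
      apply hv.2
      funext i
      have := congrFun h i
      simpa [hwdef] using this
    have hmv : A'.mulVec w = starRingEnd ℂ ν • w := by
      funext i
      have hrow := congrFun hv1 i
      simp only [Matrix.mulVec, dotProduct, Pi.smul_apply, smul_eq_mul] at hrow ⊢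
      have hAij : ∀ j, starRingEnd ℂ (A' i j) = A' i j := by
        intro j
        show starRingEnd ℂ (ι (A i j)) = ι (A i j)
        exact Complex.conj_ofReal _
      calc ∑ j, A' i j * w j = ∑ j, starRingEnd ℂ (A' i j * v j) := by
            apply Finset.sum_congr rfl
            intro j _
            rw [map_mul, hAij j, hwdef]
        _ = starRingEnd ℂ (∑ j, A' i j * v j) := (map_sum _ _ _).symm
        _ = starRingEnd ℂ (ν * v i) := by rw [hrow]
        _ = starRingEnd ℂ ν * w i := by rw [map_mul, hwdef]
    refine Module.End.hasEigenvalue_of_hasEigenvector ⟨Module.End.mem_eigenspace_iff.mpr ?_, hw0⟩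
    rw [hTdef, Matrix.toLinAlgEquiv'_apply]
    exact hmv
  -- |μ| = 1 and conjugate as a power
  have hns : Complex.normSq μ = 1 := by
    have h1 : (Complex.normSq μ) ^ p = 1 := by
      rw [← map_pow, hμp, map_one]
    have h0 : (0:ℝ) ≤ Complex.normSq μ := Complex.normSq_nonneg μ
    rcases lt_trichotomy (Complex.normSq μ) 1 with h | h | h
    · exfalso
      have := pow_lt_one₀ h0 h hp.ne_zero
      rw [h1] at this
      exact lt_irrefl 1 this
    · exact h
    · exfalso
      have := one_lt_pow₀ h hp.ne_zero
      rw [h1] at this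
      exact lt_irrefl 1 this
  have hconjpow : starRingEnd ℂ μ = μ ^ (p - 1) := by
    have e1 : μ * starRingEnd ℂ μ = 1 := by
      rw [Complex.mul_conj, hns, Complex.ofReal_one]
    have e2 : μ * μ ^ (p - 1) = 1 := by
      rw [← pow_succ']
      have : p - 1 + 1 = p := Nat.succ_pred_eq_of_pos hp.pos
      rw [this, hμp]
    exact mul_left_cancel₀ hμ0 (e1.trans e2.symm)
  -- the four eigenvalues
  set E : Fin 4 → ℕ := ![1, r, r * r, p - 1] with hEdef
  have hall : ∀ i : Fin 4, T.HasEigenvalue (μ ^ E i) := by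
    intro i
    fin_cases i
    · simpa [hEdef] using hμeig
    · exact hstep μ hμeig
    · have := hstep _ (hstep μ hμeig)
      rw [← pow_mul] at this
      exact this
    · have := hconj μ hμeig
      rw [hconjpow] at this
      exact this
  -- distinctness
  obtain ⟨f1, f2, f3, f4, f5⟩ := zmodfacts p hp (r : ZMod p) hr1 hr3
  have hpm1 : ((p - 1 : ℕ) : ZMod p) = -1 := by
    rw [Nat.cast_sub hp.one_le, ZMod.natCast_self, Nat.cast_one, zero_sub]
  have hz : ∀ i : Fin 4, ((E i : ℕ) : ZMod p) = ![1, (r : ZMod p), (r : ZMod p) ^ 2, -1] i := by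
    intro i
    fin_cases i
    · simp [hEdef]
    · simp [hEdef]
    · simp [hEdef]; ring
    · simp [hEdef, hpm1]
  have hinj : Function.Injective (fun i : Fin 4 => μ ^ E i) := by
    intro i j hij
    have hij' := (hpoweq _ _).mp hij
    rw [hz i, hz j] at hij'
    fin_cases i <;> fin_cases j <;> simp only [Matrix.cons_val_zero, Matrix.cons_val_one,
        Matrix.head_cons, Matrix.cons_val_two, Matrix.tail_cons, Matrix.cons_val_three,
        Matrix.cons_val_fin_one, Fin.isValue] at hij' <;>
      first
        | rfl
        | exact absurd hij'.symm hr1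
        | exact absurd hij' hr1
        | exact absurd hij'.symm f1
        | exact absurd hij' f1
        | exact absurd hij'.symm f2
        | exact absurd hij' f2
        | exact absurd hij'.symm f3
        | exact absurd hij' f3
        | exact absurd hij'.symm f4
        | exact absurd hij' f4
        | exact absurd hij'.symm f5
        | exact absurd hij' f5
  choose v hv using fun i => (hall i).exists_hasEigenvector
  have hli := Module.End.eigenvectors_linearIndependent' T (fun i => μ ^ E i) hinj v hv
  have hcard := hli.fintype_card_le_finrank
  rw [Module.finrank_fin_fun] at hcard
  simp at hcard


/-- A nonabelian semidirect product `ℤ/p ⋊ ℤ/3ⁿ` (with `p ≠ 3` prime, `n ≥ 1`, the action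
homomorphism having image of order `3`) does not embed in `O(3)`. -/
theorem stmt_3 (p n : ℕ) (hp : p.Prime) (hp3 : p ≠ 3) (hn : 1 ≤ n)
    (φ : Multiplicative (ZMod (3 ^ n)) →* MulAut (Multiplicative (ZMod p)))
    (hφ : Nat.card φ.range = 3) :
    ¬ ∃ f : (Multiplicative (ZMod p) ⋊[φ] Multiplicative (ZMod (3 ^ n))) →*
        Matrix.orthogonalGroup (Fin 3) ℝ, Function.Injective f := by
  rintro ⟨f, hf⟩
  haveI : NeZero (3 ^ n) := ⟨pow_ne_zero n (by norm_num)⟩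
  haveI : NeZero p := ⟨hp.ne_zero⟩
  -- generators
  set ψ : MulAut (Multiplicative (ZMod p)) := φ (Multiplicative.ofAdd 1) with hψdef
  have keyH : ∀ x : Multiplicative (ZMod (3 ^ n)),
      x = (Multiplicative.ofAdd (1 : ZMod (3 ^ n))) ^ (Multiplicative.toAdd x).val := by
    intro x
    have h1 : (Multiplicative.toAdd x).val • (1 : ZMod (3 ^ n)) = Multiplicative.toAdd x := by
      rw [nsmul_eq_mul, mul_one, ZMod.natCast_val, ZMod.cast_id]
    rw [← ofAdd_nsmul, h1]
    exact (ofAdd_toAdd _).symm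
  have keyN : ∀ x : Multiplicative (ZMod p),
      x = (Multiplicative.ofAdd (1 : ZMod p)) ^ (Multiplicative.toAdd x).val := by
    intro x
    have h1 : (Multiplicative.toAdd x).val • (1 : ZMod p) = Multiplicative.toAdd x := by
      rw [nsmul_eq_mul, mul_one, ZMod.natCast_val, ZMod.cast_id]
    rw [← ofAdd_nsmul, h1]
    exact (ofAdd_toAdd _).symm
  have hrange : φ.range = Subgroup.zpowers ψ := by
    apply le_antisymm
    · rintro - ⟨x, rfl⟩
      rw [keyH x, map_pow]
      exact Subgroup.pow_mem _ (Subgroup.mem_zpowers ψ) _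
    · rw [Subgroup.zpowers_le]
      exact ⟨_, rfl⟩
  have hψord : orderOf ψ = 3 := by
    rw [← Nat.card_zpowers, ← hrange, hφ]
  -- the multiplier c
  set c : ZMod p := Multiplicative.toAdd (ψ (Multiplicative.ofAdd 1)) with hcdef
  have hψap : ∀ x : ZMod p, ψ (Multiplicative.ofAdd x) = Multiplicative.ofAdd (x * c) := by
    intro x
    have h0 : ψ (Multiplicative.ofAdd 1) = Multiplicative.ofAdd c := by
      rw [hcdef]
      exact (ofAdd_toAdd _).symm
    calc ψ (Multiplicative.ofAdd x)
        = ψ ((Multiplicative.ofAdd (1 : ZMod p)) ^ x.val) := by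
          congr 1
          have := keyN (Multiplicative.ofAdd x)
          simpa using this
      _ = (Multiplicative.ofAdd c) ^ x.val := by rw [map_pow, h0]
      _ = Multiplicative.ofAdd (x.val • c) := by rw [ofAdd_nsmul]
      _ = Multiplicative.ofAdd (x * c) := by
          rw [nsmul_eq_mul, ZMod.natCast_val, ZMod.cast_id]
  have hc3 : c ^ 3 = 1 := by
    have h3 : ψ ^ 3 = 1 := by rw [← hψord]; exact pow_orderOf_eq_one ψ
    have := congrArg (fun (χ : MulAut (Multiplicative (ZMod p))) =>
      χ (Multiplicative.ofAdd (1 : ZMod p))) h3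
    simp only [pow_succ, pow_zero, one_mul, MulAut.mul_apply, MulAut.one_apply] at this
    rw [hψap, hψap, hψap] at this
    have h := Multiplicative.ofAdd.injective this
    linear_combination (h : 1 * c * c * c = 1)
  have hc1 : c ≠ 1 := by
    intro hc
    have hψ1 : ψ = 1 := by
      apply DFunLike.ext
      intro y
      rw [← ofAdd_toAdd y, hψap, hc, mul_one]
      rfl
    rw [hψ1, orderOf_one] at hψord
    norm_num at hψord
  -- pass to ℕ exponent
  set r : ℕ := c.val with hrdef
  have hrc : (r : ZMod p) = c := by rw [hrdef, ZMod.natCast_val, ZMod.cast_id]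
  have hr1 : (r : ZMod p) ≠ 1 := by rw [hrc]; exact hc1
  have hr3 : (r : ZMod p) ^ 3 = 1 := by rw [hrc]; exact hc3
  -- group elements
  set a : Multiplicative (ZMod p) ⋊[φ] Multiplicative (ZMod (3 ^ n)) :=
    SemidirectProduct.inl (Multiplicative.ofAdd 1) with hadef
  set b : Multiplicative (ZMod p) ⋊[φ] Multiplicative (ZMod (3 ^ n)) :=
    SemidirectProduct.inr (Multiplicative.ofAdd 1) with hbdef
  have haord : orderOf a = p := by
    rw [hadef, orderOf_injective _ SemidirectProduct.inl_injective,
      orderOf_ofAdd_eq_addOrderOf, ZMod.addOrderOf_one]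
  have hrel : b * a * b⁻¹ = a ^ r := by
    rw [hadef, hbdef, ← map_inv, ← SemidirectProduct.inl_aut, ← map_pow]
    congr 1
    show ψ (Multiplicative.ofAdd 1) = _
    rw [hψap, one_mul, keyN (Multiplicative.ofAdd c)]
    rfl
  have hrel' : b * a = a ^ r * b := by
    have := congrArg (fun x => x * b) hrel
    simpa [mul_assoc] using this
  -- matrices
  set F : (Multiplicative (ZMod p) ⋊[φ] Multiplicative (ZMod (3 ^ n))) →*
      Matrix (Fin 3) (Fin 3) ℝ :=
    ((Matrix.orthogonalGroup (Fin 3) ℝ).subtype).comp f with hFdef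
  have hFa : F a ^ p = 1 := by
    have h1 : a ^ p = 1 := by
      have h := pow_orderOf_eq_one a
      rwa [haord] at h
    calc F a ^ p = F (a ^ p) := (map_pow F a p).symm
    _ = F 1 := DFunLike.congr_arg F h1
    _ = 1 := map_one F
  have hFa1 : F a ≠ 1 := by
    intro h
    have hfa : f a = 1 := by
      apply Subtype.coe_injective
      exact h
    have : a = 1 := hf (by rw [hfa, map_one])
    rw [this, orderOf_one] at haord
    exact hp.one_lt.ne' haord.symm
  have hFbu : IsUnit (F b) := ⟨Unitary.toUnits (f b), rfl⟩
  have hFcomm : F b * F a = F a ^ r * F b := by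
    rw [← map_mul, ← map_pow, ← map_mul, hrel']
  exact core p r hp hr1 hr3 (F a) (F b) hFa hFa1 hFbu hFcomm
end

section
/- Let p and q be distinct primes, let n ≥ 1, and let G be a nonabelian semidirect product ℤ/p ⋊ ℤ/qⁿ. Then every faithful irreducible complex representation of G has dimension q. -/
open Multiplicative

private lemma pow_ofAdd_one' {m : ℕ} [NeZero m] (x : ZMod m) :
    (ofAdd (1 : ZMod m)) ^ x.val = ofAdd x := by
  rw [← ofAdd_nsmul]
  congr 1
  rw [nsmul_eq_mul, mul_one, ZMod.natCast_rightInverse x]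

private lemma aut_apply' {m : ℕ} [NeZero m] (σ : MulAut (Multiplicative (ZMod m))) (x : ZMod m) :
    σ (ofAdd x) = ofAdd ((σ (ofAdd 1)).toAdd * x) := by
  rw [← pow_ofAdd_one' x, map_pow, ← pow_ofAdd_one' ((σ (ofAdd 1)).toAdd * x)]
  rw [← ofAdd_toAdd (σ (ofAdd 1)), ← ofAdd_nsmul, ← ofAdd_nsmul]
  simp only [toAdd_ofAdd]
  congr 1
  rw [nsmul_eq_mul, nsmul_eq_mul, ZMod.natCast_rightInverse, ZMod.natCast_rightInverse]
  ring

private lemma aut_pow_apply' {m : ℕ} [NeZero m] (σ : MulAut (Multiplicative (ZMod m))) (j : ℕ)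
    (x : ZMod m) : (σ ^ j) (ofAdd x) = ofAdd (((σ (ofAdd 1)).toAdd) ^ j * x) := by
  induction j generalizing x with
  | zero => simp
  | succ j ih =>
      rw [pow_succ, MulAut.mul_apply, aut_apply' σ x, ih]
      congr 1
      ring

private lemma pow_mod_eq' {ζ : ℂ} {p : ℕ} (h : ζ ^ p = 1) (m : ℕ) :
    ζ ^ (m % p) = ζ ^ m := by
  conv_rhs => rw [← Nat.mod_add_div m p]
  rw [pow_add, pow_mul, h, one_pow, mul_one]

private lemma eig_pow' {V : Type*} [AddCommGroup V] [Module ℂ V] (f : V →ₗ[ℂ] V) (c : ℂ) (w : V)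
    (h : f w = c • w) (m : ℕ) : (f ^ m) w = c ^ m • w := by
  induction m with
  | zero => simp
  | succ m ih =>
      rw [pow_succ, Module.End.mul_apply, h, map_smul, ih, smul_smul, pow_succ, mul_comm]

private lemma exists_nontrivial_eig' {V : Type*} [AddCommGroup V] [Module ℂ V]
    {p : ℕ} (hp0 : p ≠ 0) (f : V →ₗ[ℂ] V) (hfp : f ^ p = 1) (hfne : f ≠ 1) :
    ∃ ζ : ℂ, ζ ^ p = 1 ∧ ζ ≠ 1 ∧ ∃ x : V, x ≠ 0 ∧ f x = ζ • x := by
  obtain ⟨v, hv⟩ : ∃ v, f v ≠ v := by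
    by_contra h
    push_neg at h
    exact hfne (LinearMap.ext fun w => (h w).trans (Module.End.one_apply w).symm)
  set u := f v - v with hu
  have hune : u ≠ 0 := sub_ne_zero.mpr hv
  set ω : ℂ := Complex.exp (2 * Real.pi * Complex.I / p) with hω
  have hωprim : IsPrimitiveRoot ω p := Complex.isPrimitiveRoot_exp p hp0
  have hfpv : ∀ x : V, (f ^ p) x = x := fun x => by rw [hfp, Module.End.one_apply]
  have hsum0 : ∑ j ∈ Finset.range p, (f ^ j) u = 0 := by
    have hterm : ∀ j, (f ^ j) u = (f ^ (j + 1)) v - (f ^ j) v := by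
      intro j
      rw [hu, map_sub, pow_succ, Module.End.mul_apply]
    simp_rw [hterm]
    rw [Finset.sum_range_sub (fun j => (f ^ j) v), hfpv, pow_zero, Module.End.one_apply, sub_self]
  set w : ℕ → V := fun i => ∑ j ∈ Finset.range p, ((ω ^ i)⁻¹) ^ j • (f ^ j) u with hwdef
  have hw0 : w 0 = 0 := by
    simp only [hwdef, pow_zero, inv_one, one_pow, one_smul]
    exact hsum0
  have hstep : ∀ i j : ℕ, ((ω ^ i)⁻¹) ^ j = ((ω⁻¹) ^ j) ^ i := by
    intro i j
    rw [← inv_pow, ← pow_mul, ← pow_mul, mul_comm]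
  have hwsum : ∑ i ∈ Finset.range p, w i = (p : ℂ) • u := by
    simp only [hwdef]
    rw [Finset.sum_comm]
    have hinner : ∀ j ∈ Finset.range p,
        (∑ i ∈ Finset.range p, ((ω ^ i)⁻¹) ^ j • (f ^ j) u)
          = (if j = 0 then (p : ℂ) • u else 0) := by
      intro j hj
      rw [← Finset.sum_smul]
      by_cases h0 : j = 0
      · subst h0
        simp [Finset.card_range]
      · have hy : (ω⁻¹) ^ j ≠ 1 := by
          simp only [ne_eq, inv_pow, inv_eq_one]
          exact hωprim.pow_ne_one_of_pos_of_lt h0 (Finset.mem_range.mp hj)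
        have hyp : ((ω⁻¹) ^ j) ^ p = 1 := by
          rw [← pow_mul, mul_comm, pow_mul, inv_pow, hωprim.pow_eq_one, inv_one, one_pow]
        have hgeom : ∑ i ∈ Finset.range p, ((ω⁻¹) ^ j) ^ i = 0 := by
          rw [geom_sum_eq hy, hyp, sub_self, zero_div]
        rw [show (∑ i ∈ Finset.range p, ((ω ^ i)⁻¹) ^ j)
              = ∑ i ∈ Finset.range p, ((ω⁻¹) ^ j) ^ i from
            Finset.sum_congr rfl fun i _ => hstep i j, hgeom, zero_smul, if_neg h0]
    rw [Finset.sum_congr rfl hinner]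
    simp [Finset.sum_ite_eq', Finset.mem_range, Nat.pos_of_ne_zero hp0]
  obtain ⟨i, hip, hwne⟩ : ∃ i ∈ Finset.range p, w i ≠ 0 := by
    by_contra h
    push_neg at h
    rw [Finset.sum_eq_zero h] at hwsum
    refine hune ?_
    rcases smul_eq_zero.mp hwsum.symm with h' | h'
    · exact absurd h' (Nat.cast_ne_zero.mpr hp0)
    · exact h'
  have hi0 : i ≠ 0 := fun h => hwne (h ▸ hw0)
  refine ⟨ω ^ i, ?_, ?_, w i, hwne, ?_⟩
  · rw [← pow_mul, mul_comm, pow_mul, hωprim.pow_eq_one, one_pow]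
  · exact hωprim.pow_ne_one_of_pos_of_lt hi0 (Finset.mem_range.mp hip)
  · have hζ0 : ω ^ i ≠ 0 := pow_ne_zero _ (Complex.exp_ne_zero _)
    set ζ := ω ^ i with hζ
    have key : ∑ j ∈ Finset.range p, ζ⁻¹ ^ (j + 1) • (f ^ (j + 1)) u
        = ∑ j ∈ Finset.range p, ζ⁻¹ ^ j • (f ^ j) u := by
      have e1 := Finset.sum_range_succ' (fun j => ζ⁻¹ ^ j • (f ^ j) u) p
      have e2 := Finset.sum_range_succ (fun j => ζ⁻¹ ^ j • (f ^ j) u) p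
      have hFp : ζ⁻¹ ^ p • (f ^ p) u = ζ⁻¹ ^ 0 • (f ^ 0) u := by
        rw [hfpv, pow_zero, pow_zero, Module.End.one_apply]
        congr 1
        rw [inv_pow, hζ, ← pow_mul, mul_comm, pow_mul, hωprim.pow_eq_one, one_pow, inv_one]
      have e3 : (∑ j ∈ Finset.range p, ζ⁻¹ ^ (j + 1) • (f ^ (j + 1)) u) + ζ⁻¹ ^ 0 • (f ^ 0) u
          = (∑ j ∈ Finset.range p, ζ⁻¹ ^ j • (f ^ j) u) + ζ⁻¹ ^ p • (f ^ p) u := by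
        rw [← e1, e2]
      rw [hFp] at e3
      exact add_right_cancel e3
    calc f (w i) = ∑ j ∈ Finset.range p, ζ⁻¹ ^ j • (f ^ (j + 1)) u := by
          simp only [hwdef, map_sum, map_smul]
          refine Finset.sum_congr rfl fun j _ => ?_
          rw [← Module.End.mul_apply, ← pow_succ']
      _ = ∑ j ∈ Finset.range p, ζ • (ζ⁻¹ ^ (j + 1) • (f ^ (j + 1)) u) := by
          refine Finset.sum_congr rfl fun j _ => ?_
          rw [smul_smul]
          congr 1
          rw [pow_succ (ζ⁻¹) j, show ζ * (ζ⁻¹ ^ j * ζ⁻¹) = ζ⁻¹ ^ j * (ζ * ζ⁻¹) by ring,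
            mul_inv_cancel₀ hζ0, mul_one]
      _ = ζ • ∑ j ∈ Finset.range p, ζ⁻¹ ^ (j + 1) • (f ^ (j + 1)) u := by
          rw [Finset.smul_sum]
      _ = ζ • w i := by rw [key]

/-- Every faithful irreducible complex representation of a nonabelian semidirect product
`ℤ/p ⋊ ℤ/qⁿ` (with `p ≠ q` primes, `n ≥ 1`, the action homomorphism having image of order `q`)
has dimension `q`. -/
theorem stmt_4 (p q n : ℕ) (hp : p.Prime) (hq : q.Prime) (hpq : p ≠ q) (hn : 1 ≤ n)
    (φ : Multiplicative (ZMod (q ^ n)) →* MulAut (Multiplicative (ZMod p)))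
    (hφ : Nat.card φ.range = q)
    (V : Type*) [AddCommGroup V] [Module ℂ V] [FiniteDimensional ℂ V]
    (ρ : Representation ℂ (Multiplicative (ZMod p) ⋊[φ] Multiplicative (ZMod (q ^ n))) V)
    (hfaithful : Function.Injective ρ)
    (hnonzero : Nontrivial V)
    (hirred : ∀ W : Submodule ℂ V, (∀ g, ∀ v ∈ W, ρ g v ∈ W) → W = ⊥ ∨ W = ⊤) :
    Module.finrank ℂ V = q := by
  classical
  haveI := Fact.mk hp
  haveI := Fact.mk hq
  haveI : Fact (1 < p) := ⟨hp.one_lt⟩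
  haveI : NeZero p := ⟨hp.ne_zero⟩
  haveI : NeZero (q ^ n) := ⟨pow_ne_zero n hq.ne_zero⟩
  set t₀ : Multiplicative (ZMod (q ^ n)) := ofAdd 1 with ht₀
  -- the automorphism `φ t₀` generates the image, which has order `q`
  have hrange : φ.range = Subgroup.zpowers (φ t₀) := by
    apply le_antisymm
    · rintro _ ⟨y, rfl⟩
      have hy : y = t₀ ^ (toAdd y).val := by
        rw [ht₀, pow_ofAdd_one', ofAdd_toAdd]
      rw [hy, map_pow]
      exact Subgroup.pow_mem _ (Subgroup.mem_zpowers (φ t₀)) _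
    · exact Subgroup.zpowers_le.mpr ⟨t₀, rfl⟩
  have hordφ : orderOf (φ t₀) = q := by
    rw [← Nat.card_zpowers, ← hrange, hφ]
  set σ : MulAut (Multiplicative (ZMod p)) := (φ t₀)⁻¹ with hσ
  have hordσ : orderOf σ = q := by rw [hσ, orderOf_inv, hordφ]
  have hσq : σ ^ q = 1 := by rw [← hordσ]; exact pow_orderOf_eq_one σ
  set k : ZMod p := (σ (ofAdd 1)).toAdd with hk
  have hkq : k ^ q = 1 := by
    have h1 := aut_pow_apply' σ q (1 : ZMod p)
    rw [hσq, MulAut.one_apply, ← hk, mul_one] at h1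
    exact (Multiplicative.ofAdd.injective h1).symm
  have hk1 : k ≠ 1 := by
    intro h
    have hσ1 : σ = 1 := by
      refine DFunLike.ext _ _ fun g => ?_
      rw [MulAut.one_apply, ← ofAdd_toAdd g, aut_apply', ← hk, h, one_mul]
    rw [hσ1, orderOf_one] at hordσ
    exact hq.one_lt.ne hordσ
  have hordk : orderOf k = q := orderOf_eq_prime hkq hk1
  -- group elements and relations
  set a : Multiplicative (ZMod p) ⋊[φ] Multiplicative (ZMod (q ^ n)) :=
    SemidirectProduct.inl (ofAdd 1) with ha
  set t : Multiplicative (ZMod p) ⋊[φ] Multiplicative (ZMod (q ^ n)) :=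
    SemidirectProduct.inr t₀ with ht
  have hapow : ∀ x : ZMod p, a ^ x.val = SemidirectProduct.inl (ofAdd x) := by
    intro x
    rw [ha, ← map_pow, pow_ofAdd_one']
  have hap : a ^ p = 1 := by
    rw [ha, ← map_pow, ← ofAdd_nsmul]
    simp [nsmul_eq_mul, ZMod.natCast_self]
  have h0 := SemidirectProduct.inl_aut (φ := φ) t₀⁻¹ (ofAdd (1 : ZMod p))
  rw [map_inv φ, ← hσ, inv_inv] at h0
  have h1 : a ^ k.val = t⁻¹ * a * t := by
    rw [hapow k, hk, ofAdd_toAdd, h0, ht, ha, map_inv]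
  have hta : a * t = t * a ^ k.val := by rw [h1]; group
  have hφq : φ (t₀ ^ q) = 1 := by
    rw [map_pow]
    have h2 : φ t₀ = σ⁻¹ := by rw [hσ, inv_inv]
    rw [h2, inv_pow, hσq, inv_one]
  have h2 := SemidirectProduct.inl_aut (φ := φ) (t₀ ^ q) (ofAdd (1 : ZMod p))
  rw [hφq, MulAut.one_apply, map_inv] at h2
  have h3 : a * SemidirectProduct.inr (φ := φ) (t₀ ^ q) =
      SemidirectProduct.inr (φ := φ) (t₀ ^ q) * a := by
    conv_lhs => rw [ha, h2]
    rw [ha]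
    group
  have hts : t ^ q * a = a * t ^ q := by
    rw [ht, ← map_pow]
    exact h3.symm
  -- representation-level relations
  have hane : a ≠ 1 := by
    intro h
    have h2 := SemidirectProduct.inl_injective
      ((ha.symm.trans h).trans (map_one SemidirectProduct.inl).symm)
    exact one_ne_zero (α := ZMod p) (by simpa using congrArg toAdd h2)
  have hfne : ρ a ≠ 1 := by
    intro h
    exact hane (hfaithful (h.trans (map_one ρ).symm))
  have hfp : ρ a ^ p = 1 := by rw [← map_pow, hap, map_one]
  have hfT : ρ a * ρ t = ρ t * ρ a ^ k.val := by
    rw [← map_pow, ← map_mul, ← map_mul, hta]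
  have hTq : ρ t ^ q * ρ a = ρ a * ρ t ^ q := by
    rw [← map_pow, ← map_mul, ← map_mul, hts]
  have hρne : ∀ (g) (x : V), x ≠ 0 → ρ g x ≠ 0 := by
    intro g x hx h0'
    apply hx
    have h1' : ρ g⁻¹ (ρ g x) = x := by
      rw [← Module.End.mul_apply, ← map_mul, inv_mul_cancel, map_one, Module.End.one_apply]
    rw [h0', map_zero] at h1'
    exact h1'.symm
  -- a nontrivial eigenvalue of `ρ a`
  obtain ⟨ζ, hζp, hζ1, x₁, hx₁ne, hx₁⟩ := exists_nontrivial_eig' hp.ne_zero (ρ a) hfp hfne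
  have hordζ : orderOf ζ = p := orderOf_eq_prime hζp hζ1
  -- a joint eigenvector `v₀`
  set E := Module.End.eigenspace (ρ a) ζ with hE
  have hx₁E : x₁ ∈ E := Module.End.mem_eigenspace_iff.mpr hx₁
  haveI : Nontrivial E := nontrivial_of_ne ⟨x₁, hx₁E⟩ 0 (by simp [Subtype.ext_iff, hx₁ne])
  have hSE : ∀ x ∈ E, (ρ t ^ q) x ∈ E := by
    intro x hx
    rw [hE, Module.End.mem_eigenspace_iff] at hx ⊢
    have hc := DFunLike.congr_fun hTq x
    simp only [Module.End.mul_apply] at hc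
    rw [← hc, hx, map_smul]
  obtain ⟨μ, hμ⟩ := Module.End.exists_eigenvalue ((ρ t ^ q).restrict hSE)
  obtain ⟨y₀, hy₀⟩ := hμ.exists_hasEigenvector
  set v₀ : V := (y₀ : V) with hv₀
  have hv₀ne : v₀ ≠ 0 := fun h => hy₀.2 (Subtype.ext h)
  have hfv₀ : ρ a v₀ = ζ • v₀ := Module.End.mem_eigenspace_iff.mp y₀.2
  have hSv₀ : (ρ t ^ q) v₀ = μ • v₀ := by
    have h1' := hy₀.apply_eq_smul
    have h2' := congrArg Subtype.val h1'
    simpa [LinearMap.restrict_coe_apply] using h2'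
  -- the translates of `v₀` are eigenvectors with distinct eigenvalues
  have hvf : ∀ j : ℕ, ρ a ((ρ t ^ j) v₀) = ζ ^ ((k ^ j).val) • (ρ t ^ j) v₀ := by
    intro j
    induction j with
    | zero => simpa [ZMod.val_one] using hfv₀
    | succ j ih =>
        have h1' : ρ a (ρ t ((ρ t ^ j) v₀)) = ρ t ((ρ a ^ k.val) ((ρ t ^ j) v₀)) := by
          have hc := DFunLike.congr_fun hfT ((ρ t ^ j) v₀)
          simpa only [Module.End.mul_apply] using hc
        have h2' : (ρ a ^ k.val) ((ρ t ^ j) v₀)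
            = (ζ ^ ((k ^ j).val)) ^ k.val • (ρ t ^ j) v₀ := eig_pow' (ρ a) _ _ ih k.val
        have hsc : (ζ ^ ((k ^ j).val)) ^ k.val = ζ ^ ((k ^ (j + 1)).val) := by
          rw [← pow_mul, pow_succ, ZMod.val_mul, pow_mod_eq' hζp]
        rw [pow_succ' (ρ t) j, Module.End.mul_apply, h1', h2', map_smul, hsc]
  have hvfne : ∀ j : ℕ, (ρ t ^ j) v₀ ≠ 0 := by
    intro j
    rw [← map_pow]
    exact hρne _ _ hv₀ne
  set vf : Fin q → V := fun j => (ρ t ^ (j : ℕ)) v₀ with hvfdef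
  set μf : Fin q → ℂ := fun j => ζ ^ ((k ^ (j : ℕ)).val) with hμfdef
  have hμinj : Function.Injective μf := by
    intro j1 j2 hj
    simp only [hμfdef] at hj
    have h1' : (k ^ (j1 : ℕ)).val = (k ^ (j2 : ℕ)).val := by
      refine pow_injOn_Iio_orderOf ?_ ?_ hj <;>
        · rw [Set.mem_Iio, hordζ]; exact ZMod.val_lt _
    have h2' : k ^ (j1 : ℕ) = k ^ (j2 : ℕ) := ZMod.val_injective p h1'
    have h3' : (j1 : ℕ) = (j2 : ℕ) := by
      refine pow_injOn_Iio_orderOf ?_ ?_ h2' <;> rw [Set.mem_Iio, hordk]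
      exacts [j1.isLt, j2.isLt]
    exact Fin.ext h3'
  have hlin : LinearIndependent ℂ vf :=
    Module.End.eigenvectors_linearIndependent' (ρ a) μf hμinj vf
      (fun j => ⟨Module.End.mem_eigenspace_iff.mpr (hvf (j : ℕ)), hvfne (j : ℕ)⟩)
  have hge : q ≤ Module.finrank ℂ V := by
    simpa using hlin.fintype_card_le_finrank
  -- the span of the translates is an invariant subspace
  set W := Submodule.span ℂ (Set.range vf) with hW
  have hmem : ∀ j : Fin q, vf j ∈ W := fun j => Submodule.subset_span ⟨j, rfl⟩
  have hWf : ∀ x ∈ W, ρ a x ∈ W := by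
    intro x hx
    have hle : Submodule.map (ρ a) W ≤ W := by
      rw [hW, Submodule.map_span, Submodule.span_le]
      rintro _ ⟨_, ⟨j, rfl⟩, rfl⟩
      have : ρ a (vf j) = ζ ^ ((k ^ (j : ℕ)).val) • vf j := hvf (j : ℕ)
      rw [this]
      exact Submodule.smul_mem _ _ (hmem j)
    exact hle ⟨x, hx, rfl⟩
  have hWt : ∀ x ∈ W, ρ t x ∈ W := by
    intro x hx
    have hle : Submodule.map (ρ t) W ≤ W := by
      rw [hW, Submodule.map_span, Submodule.span_le]
      rintro _ ⟨_, ⟨j, rfl⟩, rfl⟩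
      have hstep : ρ t (vf j) = (ρ t ^ ((j : ℕ) + 1)) v₀ := by
        rw [hvfdef, pow_succ' (ρ t), Module.End.mul_apply]
      rcases lt_or_eq_of_le (Nat.succ_le_of_lt j.isLt) with hlt | heq
      · rw [hstep]
        exact Submodule.subset_span ⟨⟨(j : ℕ) + 1, hlt⟩, rfl⟩
      · rw [Nat.succ_eq_add_one] at heq
        rw [hstep, heq, hSv₀]
        have hv00 : v₀ = vf 0 := by simp [hvfdef]
        rw [hv00]
        exact Submodule.smul_mem _ _ (hmem 0)
    exact hle ⟨x, hx, rfl⟩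
  have hWfn : ∀ (m : ℕ), ∀ x ∈ W, (ρ a ^ m) x ∈ W := by
    intro m
    induction m with
    | zero => intro x hx; simpa using hx
    | succ m ih =>
        intro x hx
        rw [pow_succ, Module.End.mul_apply]
        exact ih _ (hWf x hx)
  have hWtn : ∀ (m : ℕ), ∀ x ∈ W, (ρ t ^ m) x ∈ W := by
    intro m
    induction m with
    | zero => intro x hx; simpa using hx
    | succ m ih =>
        intro x hx
        rw [pow_succ, Module.End.mul_apply]
        exact ih _ (hWt x hx)
  have hWg : ∀ g, ∀ x ∈ W, ρ g x ∈ W := by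
    intro g x hx
    have hg : g = SemidirectProduct.inl g.left * SemidirectProduct.inr g.right :=
      (SemidirectProduct.inl_left_mul_inr_right g).symm
    rw [hg, map_mul, Module.End.mul_apply]
    have h2' : ρ (SemidirectProduct.inr g.right) x ∈ W := by
      have hr : (SemidirectProduct.inr g.right :
          Multiplicative (ZMod p) ⋊[φ] Multiplicative (ZMod (q ^ n)))
            = t ^ (toAdd g.right).val := by
        rw [ht, ← map_pow]
        congr 1
        rw [ht₀, pow_ofAdd_one', ofAdd_toAdd]
      rw [hr, map_pow]
      exact hWtn _ x hx
    have hl : (SemidirectProduct.inl g.left :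
        Multiplicative (ZMod p) ⋊[φ] Multiplicative (ZMod (q ^ n)))
          = a ^ (toAdd g.left).val := by
      rw [hapow, ofAdd_toAdd]
    rw [hl, map_pow]
    exact hWfn _ _ h2'
  rcases hirred W hWg with hbot | htop
  · exfalso
    have hm := hmem 0
    rw [hbot, Submodule.mem_bot] at hm
    exact hvfne 0 (by simpa [hvfdef] using hm)
  · have hle : Module.finrank ℂ V ≤ q := by
      have h1' := finrank_span_le_card (R := ℂ) (Set.range vf)
      rw [← hW, htop, finrank_top] at h1'
      refine h1'.trans ?_
      rw [Set.toFinset_range]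
      exact Finset.card_image_le.trans (by simp)
    exact le_antisymm hle hge
end

section
/- Let p be a prime and let q be an odd prime dividing p + 1. If σ is an automorphism of K = ℤ/p × ℤ/p of order q, then the only subgroups S of K satisfying σ(S) = S are the trivial subgroup and K itself. -/
/-!
An automorphism `σ` of order `q` of `K = (ℤ/p)²` acts on a `σ`-invariant line by a scalar `λ` with
`λ ^ q = 1`; since `q ∣ p + 1` is odd, `q` is prime to `p - 1 = |𝔽ₚˣ|`, so `λ = 1`. Hence `σ` would
fix an invariant line pointwise. The range of `τ = σ - 1` is then again an invariant line (it is
nonzero as `σ ≠ 1`, proper as `τ` kills the first line), so `σ` fixes it too and `τ ∘ τ = 0`. Then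
`σ ^ k = 1 + k τ`, so `q τ = 0 = p τ`, whence `τ = 0` as `q` is prime to `p`: a contradiction.
-/

lemma Nat.coprime_of_dvd_add_one {p q : ℕ} (h : q ∣ p + 1) : q.Coprime p :=
  (Nat.coprime_self_add_left.2 (Nat.coprime_one_left p)).coprime_dvd_left h

lemma Nat.coprime_sub_one_of_dvd_add_one {p q : ℕ} (hq : Odd q) (h : q ∣ p + 1) :
    q.Coprime (p - 1) := by
  have hgcd : q.gcd (p - 1) ∣ (p + 1) - (p - 1) :=
    Nat.dvd_sub ((Nat.gcd_dvd_left _ _).trans h) (Nat.gcd_dvd_right _ _)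
  have htwo : (p + 1) - (p - 1) ∣ 2 := by
    rcases p with _ | p
    · simp
    · rw [show p + 1 + 1 - (p + 1 - 1) = 2 by omega]
  exact ((Nat.coprime_two_right.2 hq).coprime_dvd_left (Nat.gcd_dvd_left _ _)).eq_one_of_dvd
    (hgcd.trans htwo)

section

variable {G : Type*} [AddGroup G]

lemma zsmul_eq_zsmul_iff_intCast_eq {v : G} {m n : ℤ} :
    m • v = n • v ↔ (m : ZMod (addOrderOf v)) = n := by
  rw [zsmul_eq_zsmul_iff_modEq, ZMod.intCast_eq_intCast_iff]

lemma AddSubgroup.card_eq_of_ne_bot_of_ne_top {p : ℕ} (hp : p.Prime) (hG : Nat.card G = p ^ 2)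
    {S : AddSubgroup G} (hbot : S ≠ ⊥) (htop : S ≠ ⊤) : Nat.card S = p := by
  have : Finite G := Nat.finite_of_card_ne_zero (hG ▸ pow_ne_zero 2 hp.ne_zero)
  obtain ⟨k, hk, hcard⟩ := (Nat.dvd_prime_pow hp).1 (hG ▸ S.card_addSubgroup_dvd_card)
  interval_cases k
  · exact absurd (S.eq_bot_of_card_eq (by simpa using hcard)) hbot
  · simpa using hcard
  · exact absurd (S.eq_top_of_card_eq (hcard.trans hG.symm)) htop

lemma AddSubgroup.eq_zmultiples_of_card_eq_prime {p : ℕ} (hp : p.Prime) {S : AddSubgroup G}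
    (hS : Nat.card S = p) {v : G} (hvS : v ∈ S) (hv : v ≠ 0) :
    addOrderOf v = p ∧ S = AddSubgroup.zmultiples v := by
  have : Finite S := Nat.finite_of_card_ne_zero (hS ▸ hp.ne_zero)
  have hord : addOrderOf v = p := by
    have := S.addOrderOf_dvd_natCard hvS
    rw [hS, Nat.dvd_prime hp, AddMonoid.addOrderOf_eq_one_iff] at this
    exact this.resolve_left hv
  refine ⟨hord, (AddSubgroup.eq_of_le_of_card_ge ?_ ?_).symm⟩
  · exact AddSubgroup.zmultiples_le.2 hvS
  · rw [Nat.card_zmultiples, hord, hS]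

end

section

variable {G : Type*} [AddCommGroup G]

namespace AddAut

lemma nsmul_apply_of_apply_eq_zsmul (σ : AddAut G) {v : G} {n : ℤ} (h : σ v = n • v) (k : ℕ) :
    (k • σ) v = n ^ k • v := by
  induction k with
  | zero => simp
  | succ k ih => rw [succ_nsmul, add_apply, h, map_zsmul, ih, smul_smul, pow_succ, mul_comm]

-- The hypothesis `h` says that `(σ - 1) ^ 2 = 0`.
lemma nsmul_apply_of_sub_fixed (σ : AddAut G) (h : ∀ x, σ (σ x - x) = σ x - x) (k : ℕ) (x : G) :
    (k • σ) x = x + k • (σ x - x) := by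
  induction k generalizing x with
  | zero => simp
  | succ k ih =>
    rw [succ_nsmul', add_apply, ih, map_add, map_nsmul, h, succ_nsmul]
    abel

lemma eq_zero_of_sub_fixed {p q : ℕ} (hqp : q.Coprime p) (hexp : ∀ x : G, p • x = 0)
    (σ : AddAut G) (hσ : q • σ = 0) (h : ∀ x, σ (σ x - x) = σ x - x) : σ = 0 := by
  ext x
  have hq : q • (σ x - x) = 0 := by
    simpa [hσ] using (nsmul_apply_of_sub_fixed σ h q x).symm
  have := (nsmul_eq_zero_iff_of_coprime hqp).1 ⟨hq, hexp _⟩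
  rwa [sub_eq_zero] at this

variable {p q : ℕ} [hp : Fact p.Prime]

lemma apply_eq_self_of_apply_mem_zmultiples (hq : q.Coprime (p - 1)) (σ : AddAut G)
    (hσ : q • σ = 0) {v : G} (hv : addOrderOf v = p) (hσv : σ v ∈ AddSubgroup.zmultiples v) :
    σ v = v := by
  have hcast (m m' : ℤ) : m • v = m' • v ↔ (m : ZMod p) = m' := by
    rw [zsmul_eq_zsmul_iff_intCast_eq, hv]
  obtain ⟨n, hn : n • v = σ v⟩ := hσv
  have hpow : (n : ZMod p) ^ q = 1 := by
    have := (hcast (n ^ q) 1).1 <| by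
      rw [← nsmul_apply_of_apply_eq_zsmul σ hn.symm q, hσ, one_zsmul, zero_apply]
    exact_mod_cast this
  have hn0 : (n : ZMod p) ≠ 0 := by
    intro h0
    have hv0 : v = 0 := σ.injective <| by
      rw [map_zero, ← hn, ← zero_zsmul v, hcast]
      exact_mod_cast h0
    rw [hv0, addOrderOf_zero] at hv
    exact hp.out.one_lt.ne hv
  have hn1 : (n : ZMod p) = 1 :=
    (pow_eq_one_iff_of_coprime hq).1 ⟨hpow, ZMod.pow_card_sub_one_eq_one hn0⟩
  simpa [hn] using (hcast n 1).2 (by exact_mod_cast hn1)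

lemma apply_eq_self_of_mem_of_card_eq (hq : q.Coprime (p - 1)) (σ : AddAut G) (hσ : q • σ = 0)
    {S : AddSubgroup G} (hcard : Nat.card S = p) (hS : ∀ s ∈ S, σ s ∈ S) :
    ∀ s ∈ S, σ s = s := by
  intro s hs
  rcases eq_or_ne s 0 with rfl | hs0
  · exact map_zero σ
  obtain ⟨hord, hSs⟩ := AddSubgroup.eq_zmultiples_of_card_eq_prime hp.out hcard hs hs0
  exact apply_eq_self_of_apply_mem_zmultiples hq σ hσ hord (hSs ▸ hS s hs)

theorem eq_bot_or_eq_top_of_invariant (hG : Nat.card G = p ^ 2) (hexp : ∀ x : G, p • x = 0)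
    (hqp : q.Coprime p) (hq : q.Coprime (p - 1)) (σ : AddAut G) (hσ : q • σ = 0) (hσ0 : σ ≠ 0)
    (S : AddSubgroup G) (hS : ∀ s ∈ S, σ s ∈ S) : S = ⊥ ∨ S = ⊤ := by
  have : Finite G := Nat.finite_of_card_ne_zero (hG ▸ pow_ne_zero 2 hp.out.ne_zero)
  by_contra! hSprop
  obtain ⟨v, hvS, hv0⟩ := S.bot_or_exists_ne_zero.resolve_left hSprop.1
  have hfixS := apply_eq_self_of_mem_of_card_eq hq σ hσ
    (AddSubgroup.card_eq_of_ne_bot_of_ne_top hp.out hG hSprop.1 hSprop.2) hS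
  let τ : G →+ G := σ.toAddMonoidHom - AddMonoidHom.id G
  have hτ : ∀ x, τ x = σ x - x := fun _ => rfl
  have hTinv : ∀ t ∈ τ.range, σ t ∈ τ.range := by
    rintro _ ⟨x, rfl⟩
    exact ⟨σ x, by simp only [hτ, map_sub]⟩
  have hTbot : τ.range ≠ ⊥ := by
    rw [Ne, AddMonoidHom.range_eq_bot_iff]
    exact fun h => hσ0 (AddEquiv.ext fun x => sub_eq_zero.1 (DFunLike.congr_fun h x))
  have hTtop : τ.range ≠ ⊤ := by
    rw [Ne, AddMonoidHom.range_eq_top, ← Finite.injective_iff_surjective]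
    exact fun hinj => hv0 (hinj (by simp [hτ, hfixS v hvS]))
  have hfixT := apply_eq_self_of_mem_of_card_eq hq σ hσ
    (AddSubgroup.card_eq_of_ne_bot_of_ne_top hp.out hG hTbot hTtop) hTinv
  exact hσ0 (eq_zero_of_sub_fixed hqp hexp σ hσ fun x => hfixT (τ x) ⟨x, rfl⟩)

end AddAut

end

/-- If `p` is prime, `q` is an odd prime dividing `p + 1`, and `σ` is an automorphism of
`K = ℤ/p × ℤ/p` of order `q`, then the only `σ`-invariant subgroups of `K` are `⊥` and `⊤`. -/
theorem stmt_10 (p q : ℕ) (hp : p.Prime) (hq : q.Prime) (hqodd : Odd q) (hdvd : q ∣ p + 1)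
    (σ : AddAut (ZMod p × ZMod p)) (hσ : addOrderOf σ = q)
    (S : AddSubgroup (ZMod p × ZMod p)) (hS : AddSubgroup.map σ.toAddMonoidHom S = S) :
    S = ⊥ ∨ S = ⊤ := by
  have : Fact p.Prime := ⟨hp⟩
  have hσ0 : σ ≠ 0 := by
    rintro rfl
    exact hq.one_lt.ne (addOrderOf_zero.symm.trans hσ)
  exact AddAut.eq_bot_or_eq_top_of_invariant (by simp [sq]) (fun x => by ext <;> simp)
    (Nat.coprime_of_dvd_add_one hdvd) (Nat.coprime_sub_one_of_dvd_add_one hqodd hdvd) σ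
    (hσ ▸ addOrderOf_nsmul_eq_zero σ) hσ0 S (fun s hs => hS ▸ ⟨s, hs, rfl⟩)
end

section
/- Let p be a prime, let q be an odd prime dividing p + 1, let σ be an automorphism of ℤ/p × ℤ/p of order q, and let G = (ℤ/p × ℤ/p) ⋊ ℤ/q be the semidirect product in which a fixed generator of ℤ/q acts by σ. Then G is nonabelian and every proper subgroup of G is abelian. -/
/-!
Write `N = ℤ/p × ℤ/p` and `K = ℤ/q`. A proper subgroup `H` either maps trivially to `K`, and then
lies in the abelian group `N`, or it surjects onto `K`, and then `W = H ∩ N` is stable under the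
action of `K`. If `W = 1`, then `H` embeds into `K`; if `W = N`, then `H` is everything. The case
`|W| = p` cannot occur: the fixed points of the `q`-group `K` on a `K`-stable subgroup have order
congruent to that subgroup's order mod `q`, and `p ≡ -1 (mod q)` with `q` odd, so `K` fixes all of
`W` (as `p ≢ 1`) and then all of `N` (as the fixed subgroup contains `W` and its order is
`≡ p² ≡ 1`), contradicting `σ ≠ 1`.
-/

theorem Nat.even_iff_even_of_pow_modEq_pow {p q i j : ℕ} (hq : 2 < q) (hdvd : q ∣ p + 1)
    (h : p ^ i ≡ p ^ j [MOD q]) : Even i ↔ Even j := by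
  have : Fact (2 < q) := ⟨hq⟩
  have hp : (p : ZMod q) = -1 :=
    eq_neg_of_add_eq_zero_left (by exact_mod_cast (ZMod.natCast_eq_zero_iff _ _).2 hdvd)
  rw [← ZMod.natCast_eq_natCast_iff] at h
  push_cast [hp] at h
  rcases i.even_or_odd with hi | hi <;> rcases j.even_or_odd with hj | hj
  all_goals simp_all [Odd.neg_one_pow, ZMod.neg_one_ne_one, ZMod.neg_one_ne_one.symm,
    ← Nat.not_odd_iff_even]

namespace IsPGroup

variable {K N : Type*} [Group K] [Group N] [MulDistribMulAction K N] [Finite N] {p q : ℕ}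
  [Fact q.Prime] {W : Subgroup N}

theorem card_inf_fixedPoints_modEq (hK : IsPGroup q K) (hW : ∀ k : K, ∀ w ∈ W, k • w ∈ W) :
    Nat.card (W ⊓ FixedPoints.subgroup K N : Subgroup N) ≡ Nat.card W [MOD q] := by
  let S : SubMulAction K N := ⟨W, fun k _ hw => hW k _ hw⟩
  have hfix : MulAction.fixedPoints K S ≃ (W ⊓ FixedPoints.subgroup K N : Subgroup N) :=
    { toFun := fun s => ⟨s.1, s.1.2, fun k => congrArg Subtype.val (s.2 k)⟩
      invFun := fun n => ⟨⟨n, n.2.1⟩, fun k => Subtype.ext (n.2.2 k)⟩ }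
  exact (Nat.card_congr hfix ▸ hK.card_modEq_card_fixedPoints S).symm

variable [hp : Fact p.Prime]

theorem le_fixedPoints_subgroup (hK : IsPGroup q K) (hq : 2 < q) (hdvd : q ∣ p + 1)
    (hWcard : Nat.card W = p) (hW : ∀ k : K, ∀ w ∈ W, k • w ∈ W) :
    W ≤ FixedPoints.subgroup K N := by
  set F := FixedPoints.subgroup K N
  have hdvd_p : Nat.card (W ⊓ F : Subgroup N) ∣ p ^ 1 := by
    simpa [hWcard] using Subgroup.card_dvd_of_le (inf_le_left : W ⊓ F ≤ W)
  obtain ⟨i, hi, hWF⟩ := (Nat.dvd_prime_pow hp.out).1 hdvd_p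
  have hmod : p ^ i ≡ p ^ 1 [MOD q] := by
    rw [pow_one, ← hWF, ← hWcard]
    exact hK.card_inf_fixedPoints_modEq hW
  have hparity := Nat.even_iff_even_of_pow_modEq_pow hq hdvd hmod
  interval_cases i
  · simp at hparity
  · have := Subgroup.eq_of_le_of_card_ge (inf_le_left : W ⊓ F ≤ W) (by rw [hWF, hWcard, pow_one])
    exact this ▸ inf_le_right

theorem fixedPoints_subgroup_eq_top (hK : IsPGroup q K) (hq : 2 < q) (hdvd : q ∣ p + 1)
    (hN : Nat.card N = p ^ 2) (hWcard : Nat.card W = p) (hW : ∀ k : K, ∀ w ∈ W, k • w ∈ W) :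
    FixedPoints.subgroup K N = ⊤ := by
  set F := FixedPoints.subgroup K N
  obtain ⟨j, hj, hF⟩ := (Nat.dvd_prime_pow hp.out).1 (hN ▸ F.card_subgroup_dvd_card)
  have hmod : p ^ j ≡ p ^ 2 [MOD q] := by
    have := hK.card_inf_fixedPoints_modEq (W := (⊤ : Subgroup N)) fun _ _ _ => trivial
    rwa [top_inf_eq, hF, Subgroup.card_top, hN] at this
  have hparity := Nat.even_iff_even_of_pow_modEq_pow hq hdvd hmod
  interval_cases j
  · have := Subgroup.card_le_of_le (hK.le_fixedPoints_subgroup hq hdvd hWcard hW)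
    rw [hF, hWcard] at this
    exact absurd this hp.out.one_lt.not_ge
  · simp at hparity
  · exact Subgroup.eq_top_of_card_eq _ (by rw [hF, hN])

end IsPGroup

namespace SemidirectProduct

variable {N K : Type*}

theorem commute_inl_inr_iff [Group N] [Group K] {φ : K →* MulAut N} {n : N} {k : K} :
    Commute (inl n : N ⋊[φ] K) (inr k) ↔ φ k n = n := by
  rw [← inl_inj (φ := φ), inl_aut, map_inv, mul_inv_eq_iff_eq_mul, eq_comm]
  rfl

theorem eq_top_of_range_inl_le [Group N] [Group K] {φ : K →* MulAut N} {H : Subgroup (N ⋊[φ] K)}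
    (hH : H.map rightHom = ⊤) (hN : inl.range ≤ H) : H = ⊤ := by
  refine (Subgroup.eq_top_iff' H).2 fun g => ?_
  obtain ⟨h, hh, hgh⟩ := Subgroup.mem_map.1 (hH ▸ Subgroup.mem_top g.right)
  have : g * h⁻¹ ∈ H := by
    apply hN
    rw [range_inl_eq_ker_rightHom, MonoidHom.mem_ker, map_mul, map_inv, hgh, rightHom_eq_right,
      mul_inv_cancel]
  simpa using H.mul_mem this hh

section CommGroupLeft

variable [CommGroup N] [Group K] {φ : K →* MulAut N} {H : Subgroup (N ⋊[φ] K)}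

theorem inl_aut_mem_of_map_rightHom_eq_top (hH : H.map rightHom = ⊤) {n : N} (hn : inl n ∈ H)
    (k : K) : inl (φ k n) ∈ H := by
  obtain ⟨h, hh, rfl⟩ := Subgroup.mem_map.1 (hH ▸ Subgroup.mem_top k)
  have hconj : h * inl n * h⁻¹ = inl (φ h.right n) := calc
    h * inl n * h⁻¹ = inl h.left * (inr h.right * inl n * (inr h.right)⁻¹) * (inl h.left)⁻¹ := by
      conv_lhs => rw [← inl_left_mul_inr_right h]
      group
    _ = inl (h.left * φ h.right n * h.left⁻¹) := by
      rw [← map_inv, ← inl_aut, map_mul, map_mul, map_inv]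
    _ = inl (φ h.right n) := by rw [mul_inv_cancel_comm]
  exact hconj ▸ H.mul_mem (H.mul_mem hh hn) (H.inv_mem hh)

theorem commute_of_map_rightHom_eq_bot (hH : H.map rightHom = ⊥) {a b : N ⋊[φ] K} (ha : a ∈ H)
    (hb : b ∈ H) : Commute a b := by
  have hle : H ≤ inl.range := range_inl_eq_ker_rightHom (φ := φ) ▸ (H.map_eq_bot_iff).1 hH
  obtain ⟨x, rfl⟩ := hle ha
  obtain ⟨y, rfl⟩ := hle hb
  exact (Commute.all x y).map inl

end CommGroupLeft

theorem commute_of_comap_inl_eq_bot [Group N] [CommGroup K] {φ : K →* MulAut N}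
    {H : Subgroup (N ⋊[φ] K)} (hH : H.comap inl = ⊥) {a b : N ⋊[φ] K} (ha : a ∈ H)
    (hb : b ∈ H) : Commute a b := by
  set c := a * b * (b * a)⁻¹
  have hc : c = inl c.left := by
    ext
    · rfl
    · simp [c, mul_comm a.right b.right]
  have hcW : c.left ∈ H.comap inl := by
    rw [Subgroup.mem_comap, ← hc]
    exact H.mul_mem (H.mul_mem ha hb) (H.inv_mem (H.mul_mem hb ha))
  rw [hH, Subgroup.mem_bot] at hcW
  rwa [hcW, map_one, mul_inv_eq_one] at hc

theorem commute_of_mem_of_ne_top [CommGroup N] [CommGroup K] [Finite N] {φ : K →* MulAut N}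
    {p q : ℕ} [Fact p.Prime] [hq : Fact q.Prime] (hqodd : Odd q) (hdvd : q ∣ p + 1)
    (hN : Nat.card N = p ^ 2) (hK : Nat.card K = q) (hφ : φ ≠ 1)
    {H : Subgroup (N ⋊[φ] K)} (hH : H ≠ ⊤) {a b : N ⋊[φ] K} (ha : a ∈ H) (hb : b ∈ H) :
    Commute a b := by
  have : Fact (Nat.card K).Prime := hK ▸ hq
  rcases (H.map rightHom).eq_bot_or_eq_top_of_prime_card with hbot | htop
  · exact commute_of_map_rightHom_eq_bot hbot ha hb
  set W := H.comap inl
  obtain ⟨i, hi, hWcard⟩ := (Nat.dvd_prime_pow (Fact.out : p.Prime)).1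
    (hN ▸ W.card_subgroup_dvd_card)
  interval_cases i
  · exact commute_of_comap_inl_eq_bot (Subgroup.eq_bot_of_card_eq W hWcard) ha hb
  · let _ := MulDistribMulAction.compHom N φ
    have hKq : IsPGroup q K := IsPGroup.of_card (n := 1) (by rw [hK, pow_one])
    have hq2 : 2 < q := by
      obtain ⟨m, rfl⟩ := hqodd
      have := hq.out.two_le
      omega
    have hfix : FixedPoints.subgroup K N = ⊤ :=
      hKq.fixedPoints_subgroup_eq_top hq2 hdvd hN (by rw [hWcard, pow_one])
        fun k w hw => inl_aut_mem_of_map_rightHom_eq_top htop hw k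
    exact absurd (MonoidHom.ext fun k => MulEquiv.ext fun n => (Subgroup.eq_top_iff' _).1 hfix n k)
      hφ
  · refine absurd (eq_top_of_range_inl_le htop ?_) hH
    rintro _ ⟨n, rfl⟩
    change n ∈ W
    rw [Subgroup.eq_top_of_card_eq W (hWcard.trans hN.symm)]
    exact Subgroup.mem_top n

end SemidirectProduct

open Multiplicative SemidirectProduct in
/-- Let `p` be prime, `q` an odd prime dividing `p + 1`, `σ` an automorphism of `ℤ/p × ℤ/p` of
order `q`, and `G = (ℤ/p × ℤ/p) ⋊ ℤ/q` the semidirect product in which a fixed generator of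
`ℤ/q` acts by `σ`. Then `G` is nonabelian and every proper subgroup of `G` is abelian. -/
theorem stmt_11 (p q : ℕ) (hp : p.Prime) (hq : q.Prime) (hqodd : Odd q) (hdvd : q ∣ p + 1)
    (σ : AddAut (ZMod p × ZMod p)) (hσ : addOrderOf σ = q)
    (φ : Multiplicative (ZMod q) →* MulAut (Multiplicative (ZMod p × ZMod p)))
    (hφ : φ (Multiplicative.ofAdd (1 : ZMod q)) = AddEquiv.toMultiplicative σ) :
    (∃ a b : Multiplicative (ZMod p × ZMod p) ⋊[φ] Multiplicative (ZMod q),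
      a * b ≠ b * a) ∧
    (∀ H : Subgroup (Multiplicative (ZMod p × ZMod p) ⋊[φ] Multiplicative (ZMod q)),
      H ≠ ⊤ → ∀ a b, a ∈ H → b ∈ H → a * b = b * a) := by
  have : Fact p.Prime := ⟨hp⟩
  have : Fact q.Prime := ⟨hq⟩
  obtain ⟨v, hv⟩ : ∃ v, σ v ≠ v := by
    by_contra! h
    rw [show σ = 0 from AddEquiv.ext h, addOrderOf_zero] at hσ
    exact hq.one_lt.ne hσ
  have hmove : φ (ofAdd 1) (ofAdd v) ≠ ofAdd v := by
    rw [hφ]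
    exact fun h => hv (ofAdd.injective h)
  refine ⟨⟨inl (ofAdd v), inr (ofAdd 1), fun h => hmove (commute_inl_inr_iff.1 h)⟩,
    fun H hH a b ha hb => commute_of_mem_of_ne_top hqodd hdvd ?_ ?_ ?_ hH ha hb⟩
  · simp [sq]
  · simp
  · rintro rfl
    exact hmove rfl
end
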